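/- arXiv:1505.06589 — 5 statements merged into one kernel-verified Lean document; each statement's English description precedes it below -/
import Mathlib

section
/- Let N ≥ 2 be an integer, R > 0 and p > 0. Then every positive radial solution (u,v) of the system Δu = v^p, Δv = e^{|∇u|} on the ball B_R either is bounded (both u and v bounded on [0,R)) or satisfies that u is bounded on [0,R) and v(r) → ∞ as r → R⁻; in particular the u-component of every such solution is bounded. -/
/-!
In divergence form the equations read `(r^(N-1) u')' = r^(N-1) v^p` and
`(r^(N-1) v')' = r^(N-1) exp u'`; comparing fluxes shows that `u`, `v` and `u'` are nondecreasing,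
`v^p / N ≤ u'' ≤ v^p` and `exp u' / N ≤ v'' ≤ exp u'`. Hence `exp u' - N v^p v'` and
`v' - N v^(p+1) / (p+1) - C r` are nonincreasing, which gives `exp u' ≲ v^(2p+1)` away from the
centre and so the ODE inequality `u'' ≳ exp (θ u')` with `θ = p / (2p+1)`. Integrating it,
`u'(r) ≤ C - θ⁻¹ log (R - r)`, which is integrable up to `R`, so `u` is bounded. Being
nondecreasing, `v` is either bounded or tends to `∞`.
-/

open MeasureTheory Set Filter

/-- `(u, v)` is a positive radial solution of `Δu = v^p`, `Δv = exp(|∇u|)` on the ball `B_R`,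
written in radial coordinates. -/
def IsPositiveRadialSolExp (N : ℕ) (R p : ℝ) (u v : ℝ → ℝ) : Prop :=
  ContDiffOn ℝ 2 u (Set.Ico 0 R) ∧ ContDiffOn ℝ 2 v (Set.Ico 0 R) ∧
  (∀ r ∈ Set.Ico (0:ℝ) R, 0 < u r ∧ 0 < v r) ∧
  deriv u 0 = 0 ∧ deriv v 0 = 0 ∧
  (∀ r ∈ Set.Ioo (0:ℝ) R,
    deriv (deriv u) r + ((N : ℝ) - 1) / r * deriv u r = v r ^ p) ∧
  (∀ r ∈ Set.Ioo (0:ℝ) R,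
    deriv (deriv v) r + ((N : ℝ) - 1) / r * deriv v r = Real.exp |deriv u r|)

open Real Topology

lemma ContDiffOn.hasDerivAt_deriv {w : ℝ → ℝ} {s : Set ℝ} {x : ℝ}
    (hw : ContDiffOn ℝ 1 w s) (hs : s ∈ 𝓝 x) : HasDerivAt w (deriv w x) x :=
  ((hw.differentiableOn one_ne_zero).differentiableAt hs).hasDerivAt

lemma monotoneOn_of_forall_hasDerivAt_nonneg {D : Set ℝ} (hD : Convex ℝ D) {f f' : ℝ → ℝ}
    (hf : ∀ x ∈ D, HasDerivAt f (f' x) x) (hf' : ∀ x ∈ interior D, 0 ≤ f' x) :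
    MonotoneOn f D :=
  monotoneOn_of_hasDerivWithinAt_nonneg hD (fun x hx => (hf x hx).continuousAt.continuousWithinAt)
    (fun x hx => (hf x (interior_subset hx)).hasDerivWithinAt) hf'

lemma antitoneOn_of_forall_hasDerivAt_nonpos {D : Set ℝ} (hD : Convex ℝ D) {f f' : ℝ → ℝ}
    (hf : ∀ x ∈ D, HasDerivAt f (f' x) x) (hf' : ∀ x ∈ interior D, f' x ≤ 0) :
    AntitoneOn f D :=
  antitoneOn_of_hasDerivWithinAt_nonpos hD (fun x hx => (hf x hx).continuousAt.continuousWithinAt)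
    (fun x hx => (hf x (interior_subset hx)).hasDerivWithinAt) hf'

lemma monotoneOn_Ico_of_deriv_nonneg {a R : ℝ} {w : ℝ → ℝ} (hw : ContDiffOn ℝ 1 w (Ico a R))
    (hw' : ∀ x ∈ Ioo a R, 0 ≤ deriv w x) : MonotoneOn w (Ico a R) :=
  monotoneOn_of_deriv_nonneg (convex_Ico a R) hw.continuousOn
    (by simpa using (hw.mono Ioo_subset_Ico_self).differentiableOn one_ne_zero)
    (by simpa using hw')

lemma nonneg_of_monotoneOn_Ioc_of_tendsto {g : ℝ → ℝ} {x : ℝ} (hx : 0 < x)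
    (hg : MonotoneOn g (Ioc 0 x)) (h0 : Tendsto g (𝓝[>] 0) (𝓝 0)) : 0 ≤ g x :=
  le_of_tendsto h0 <| by
    filter_upwards [Ioo_mem_nhdsGT hx] with s hs using hg ⟨hs.1, hs.2.le⟩ ⟨hx, le_rfl⟩ hs.2.le

lemma tendsto_nhdsLT_atTop_of_monotoneOn {f : ℝ → ℝ} {a R : ℝ} (hf : MonotoneOn f (Ico a R))
    (hf_unbdd : ¬ ∃ M, ∀ r ∈ Ico a R, f r ≤ M) : Tendsto f (𝓝[<] R) atTop := by
  refine tendsto_atTop.2 fun b => ?_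
  push Not at hf_unbdd
  obtain ⟨r₀, hr₀, hb⟩ := hf_unbdd b
  filter_upwards [Ioo_mem_nhdsLT hr₀.2] with r hr
  exact hb.le.trans (hf hr₀ ⟨hr₀.1.trans hr.1.le, hr.2⟩ hr.1.le)

/-- `w'' + (k / r) w' = f` on `(0, R)` with vanishing flux `r ^ k w'` at the centre: the radial
form of `Δw = f` on a ball of dimension `k + 1`. -/
structure RadialPoisson (k : ℕ) (R : ℝ) (w f : ℝ → ℝ) : Prop where
  hasDerivAt_deriv : ∀ x ∈ Ioo 0 R, HasDerivAt (deriv w) (deriv (deriv w) x) x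
  eq : ∀ x ∈ Ioo 0 R, deriv (deriv w) x + k / x * deriv w x = f x
  tendsto_pow_mul_deriv : Tendsto (fun r => r ^ k * deriv w r) (𝓝[>] 0) (𝓝 0)

namespace RadialPoisson

variable {k : ℕ} {R : ℝ} {w f : ℝ → ℝ}

lemma of_contDiffOn (hR : 0 < R) (hk : k ≠ 0) (hw : ContDiffOn ℝ 2 w (Ico 0 R))
    (heq : ∀ x ∈ Ioo 0 R, deriv (deriv w) x + k / x * deriv w x = f x) :
    RadialPoisson k R w f where
  hasDerivAt_deriv x hx :=
    ((hw.mono Ioo_subset_Ico_self).deriv_of_isOpen isOpen_Ioo (m := 1) le_rfl).hasDerivAt_deriv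
      (isOpen_Ioo.mem_nhds hx)
  eq := heq
  tendsto_pow_mul_deriv := by
    have hc : ContinuousWithinAt (derivWithin w (Ico 0 R)) (Ico 0 R) 0 :=
      hw.continuousOn_derivWithin (uniqueDiffOn_Ico 0 R) (by norm_num) 0 (left_mem_Ico.2 hR)
    have hd : Tendsto (deriv w) (𝓝[>] 0) (𝓝 (derivWithin w (Ico 0 R) 0)) := by
      have := hc.tendsto.mono_left (nhdsWithin_mono _ (Ioo_subset_Ico_self (a := 0) (b := R)))
      rw [nhdsWithin_Ioo_eq_nhdsGT hR] at this
      refine this.congr' ?_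
      filter_upwards [Ioo_mem_nhdsGT hR] with r hr
      exact derivWithin_of_mem_nhds (Ico_mem_nhds hr.1 hr.2)
    have hpow : Tendsto (fun r : ℝ => r ^ k) (𝓝[>] 0) (𝓝 0) := by
      simpa [zero_pow hk] using
        ((continuous_pow k : Continuous fun r : ℝ => r ^ k).tendsto 0).mono_left nhdsWithin_le_nhds
    simpa using hpow.mul hd

lemma hasDerivAt_pow_mul_deriv (h : RadialPoisson k R w f) {x : ℝ} (hx : x ∈ Ioo 0 R) :
    HasDerivAt (fun r => r ^ k * deriv w r) (x ^ k * f x) x := by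
  refine ((hasDerivAt_pow k x).mul (h.hasDerivAt_deriv x hx)).congr_deriv ?_
  rw [← h.eq x hx]
  rcases k with _ | k
  · simp
  · have : x ≠ 0 := hx.1.ne'
    field_simp
    push_cast
    ring

lemma deriv_nonneg (h : RadialPoisson k R w f) (hf : ∀ x ∈ Ioo 0 R, 0 ≤ f x) {x : ℝ}
    (hx : x ∈ Ioo 0 R) : 0 ≤ deriv w x := by
  have hsub : Ioc 0 x ⊆ Ioo 0 R := Ioc_subset_Ioo_right hx.2
  have hmono : MonotoneOn (fun r => r ^ k * deriv w r) (Ioc 0 x) :=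
    monotoneOn_of_forall_hasDerivAt_nonneg (convex_Ioc 0 x)
      (fun y hy => h.hasDerivAt_pow_mul_deriv (hsub hy)) fun y hy => by
        rw [interior_Ioc] at hy
        exact mul_nonneg (pow_nonneg hy.1.le k) (hf y (hsub ⟨hy.1, hy.2.le⟩))
  have hflux : 0 ≤ x ^ k * deriv w x :=
    nonneg_of_monotoneOn_Ioc_of_tendsto (g := fun r => r ^ k * deriv w r) hx.1 hmono
      h.tendsto_pow_mul_deriv
  exact nonneg_of_mul_nonneg_right hflux (pow_pos hx.1 k)

lemma deriv_le (h : RadialPoisson k R w f) (hf : MonotoneOn f (Ioo 0 R)) {x : ℝ}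
    (hx : x ∈ Ioo 0 R) : deriv w x ≤ x * f x / (k + 1) := by
  have hsub : Ioc 0 x ⊆ Ioo 0 R := Ioc_subset_Ioo_right hx.2
  -- compare the flux `r ^ k w'` with the flux of the solution with constant source `f x`
  set g : ℝ → ℝ := fun r => r ^ (k + 1) * f x / (k + 1) - r ^ k * deriv w r
  have hg : ∀ y ∈ Ioc 0 x, HasDerivAt g (y ^ k * (f x - f y)) y := by
    intro y hy
    refine ((((hasDerivAt_pow (k + 1) y).mul_const (f x)).div_const (k + 1 : ℝ)).sub
      (h.hasDerivAt_pow_mul_deriv (hsub hy))).congr_deriv ?_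
    push_cast
    field_simp
  have hmono : MonotoneOn g (Ioc 0 x) :=
    monotoneOn_of_forall_hasDerivAt_nonneg (convex_Ioc 0 x) hg fun y hy => by
      rw [interior_Ioc] at hy
      exact mul_nonneg (pow_nonneg hy.1.le k)
        (sub_nonneg.2 (hf (hsub ⟨hy.1, hy.2.le⟩) hx hy.2.le))
  have hlim : Tendsto g (𝓝[>] 0) (𝓝 0) := by
    have : Tendsto (fun r : ℝ => r ^ (k + 1) * f x / (k + 1)) (𝓝[>] 0) (𝓝 0) := by
      have hc : Continuous fun r : ℝ => r ^ (k + 1) * f x / (k + 1) := by fun_prop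
      simpa using (hc.tendsto 0).mono_left nhdsWithin_le_nhds
    simpa using this.sub h.tendsto_pow_mul_deriv
  have hgx := nonneg_of_monotoneOn_Ioc_of_tendsto hx.1 hmono hlim
  have hxk : 0 < x ^ k := pow_pos hx.1 k
  refine le_of_mul_le_mul_left ?_ hxk
  simp only [g, sub_nonneg] at hgx
  calc x ^ k * deriv w x ≤ x ^ (k + 1) * f x / (k + 1) := hgx
    _ = x ^ k * (x * f x / (k + 1)) := by ring

lemma div_le_deriv_deriv (h : RadialPoisson k R w f) (hf : MonotoneOn f (Ioo 0 R)) {x : ℝ}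
    (hx : x ∈ Ioo 0 R) : f x / (k + 1) ≤ deriv (deriv w) x := by
  have hflux := mul_le_mul_of_nonneg_left (h.deriv_le hf hx)
    (div_nonneg k.cast_nonneg hx.1.le : 0 ≤ (k : ℝ) / x)
  have : (k : ℝ) / x * (x * f x / (k + 1)) = f x - f x / (k + 1) := by
    have : x ≠ 0 := hx.1.ne'
    field_simp
    ring
  linarith [h.eq x hx]

lemma deriv_deriv_le (h : RadialPoisson k R w f) (hf : ∀ x ∈ Ioo 0 R, 0 ≤ f x) {x : ℝ}
    (hx : x ∈ Ioo 0 R) : deriv (deriv w) x ≤ f x := by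
  have : 0 ≤ (k : ℝ) / x * deriv w x :=
    mul_nonneg (div_nonneg k.cast_nonneg hx.1.le) (h.deriv_nonneg hf hx)
  linarith [h.eq x hx]

end RadialPoisson

section ODEInequalities

variable {a R : ℝ}

lemma rpow_sub_mul_rpow_le {m y s t : ℝ} (hm : 0 < m) (hmy : m ≤ y) (hst : s ≤ t) :
    m ^ (t - s) * y ^ s ≤ y ^ t := by
  have hy : 0 < y := hm.trans_le hmy
  calc m ^ (t - s) * y ^ s ≤ y ^ (t - s) * y ^ s := by gcongr
    _ = y ^ t := by rw [← rpow_add hy, sub_add_cancel]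

lemma exp_le_add_mul_rpow_mul_deriv {p c : ℝ} {U V : ℝ → ℝ} (hp : 0 ≤ p) (hc : 0 ≤ c)
    (hU : ∀ x ∈ Ico a R, HasDerivAt U (deriv U x) x)
    (hV : ∀ x ∈ Ico a R, HasDerivAt V (deriv V x) x)
    (hV' : ∀ x ∈ Ico a R, HasDerivAt (deriv V) (deriv (deriv V) x) x)
    (hV_pos : ∀ x ∈ Ico a R, 0 < V x) (hV'_nonneg : ∀ x ∈ Ico a R, 0 ≤ deriv V x)
    (hU' : ∀ x ∈ Ico a R, deriv U x ≤ V x ^ p)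
    (hV'' : ∀ x ∈ Ico a R, exp (U x) ≤ c * deriv (deriv V) x) :
    ∀ r ∈ Ico a R, exp (U r) ≤ exp (U a) + c * (V r ^ p * deriv V r) := by
  have hd : ∀ x ∈ Ico a R, HasDerivAt (fun r => exp (U r) - c * (V r ^ p * deriv V r))
      (exp (U x) * deriv U x - c * (deriv V x * p * V x ^ (p - 1) * deriv V x
        + V x ^ p * deriv (deriv V) x)) x := fun x hx =>
    (hU x hx).exp.sub
      ((((hV x hx).rpow_const (Or.inl (hV_pos x hx).ne')).mul (hV' x hx)).const_mul c)
  have hanti := antitoneOn_of_forall_hasDerivAt_nonpos (convex_Ico a R) hd fun x hx => by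
    have hx := interior_subset hx
    have hVp := rpow_pos_of_pos (hV_pos x hx) p
    have h1 := mul_le_mul_of_nonneg_left (hU' x hx) (exp_pos (U x)).le
    have h2 := mul_le_mul_of_nonneg_right (hV'' x hx) hVp.le
    have h3 : 0 ≤ c * (deriv V x * p * V x ^ (p - 1) * deriv V x) := by
      have := rpow_pos_of_pos (hV_pos x hx) (p - 1)
      have := hV'_nonneg x hx
      positivity
    nlinarith
  intro r hr
  have ha : a ∈ Ico a R := ⟨le_rfl, hr.1.trans_lt hr.2⟩
  have h := hanti ha hr hr.1
  have : 0 ≤ c * (V a ^ p * deriv V a) :=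
    mul_nonneg hc (mul_nonneg (rpow_pos_of_pos (hV_pos a ha) p).le (hV'_nonneg a ha))
  simp only at h
  linarith

lemma deriv_le_add_mul_rpow {p c C : ℝ} {V : ℝ → ℝ} (hp : 0 ≤ p) (hc : 0 ≤ c) (hC : 0 ≤ C)
    (hV : ∀ x ∈ Ico a R, HasDerivAt V (deriv V x) x)
    (hV' : ∀ x ∈ Ico a R, HasDerivAt (deriv V) (deriv (deriv V) x) x)
    (hV_pos : ∀ x ∈ Ico a R, 0 < V x)
    (hV'' : ∀ x ∈ Ico a R, deriv (deriv V) x ≤ C + c * (V x ^ p * deriv V x)) :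
    ∀ r ∈ Ico a R, deriv V r ≤ deriv V a + C * (R - a) + c / (p + 1) * V r ^ (p + 1) := by
  have hd : ∀ x ∈ Ico a R, HasDerivAt (fun r => deriv V r - c / (p + 1) * V r ^ (p + 1) - C * r)
      (deriv (deriv V) x - c * (V x ^ p * deriv V x) - C) x := fun x hx => by
    refine (((hV' x hx).sub (((hV x hx).rpow_const (p := p + 1)
      (Or.inl (hV_pos x hx).ne')).const_mul (c / (p + 1)))).sub
      ((hasDerivAt_id x).const_mul C)).congr_deriv ?_
    have : p + 1 ≠ 0 := by linarith
    rw [add_sub_cancel_right]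
    field_simp
  have hanti := antitoneOn_of_forall_hasDerivAt_nonpos (convex_Ico a R) hd fun x hx => by
    linarith [hV'' x (interior_subset hx)]
  intro r hr
  have ha : a ∈ Ico a R := ⟨le_rfl, hr.1.trans_lt hr.2⟩
  have h := hanti ha hr hr.1
  have : 0 ≤ c / (p + 1) * V a ^ (p + 1) :=
    mul_nonneg (div_nonneg hc (by linarith)) (rpow_pos_of_pos (hV_pos a ha) _).le
  have : C * r ≤ C * R := mul_le_mul_of_nonneg_left hr.2.le hC
  simp only at h
  linarith

lemma exists_exp_le_mul_rpow {p c : ℝ} {U V : ℝ → ℝ} (haR : a < R) (hp : 0 ≤ p) (hc : 0 ≤ c)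
    (hU : ∀ x ∈ Ico a R, HasDerivAt U (deriv U x) x)
    (hV : ∀ x ∈ Ico a R, HasDerivAt V (deriv V x) x)
    (hV' : ∀ x ∈ Ico a R, HasDerivAt (deriv V) (deriv (deriv V) x) x)
    (hV_pos : ∀ x ∈ Ico a R, 0 < V x) (hV'_nonneg : ∀ x ∈ Ico a R, 0 ≤ deriv V x)
    (hU' : ∀ x ∈ Ico a R, deriv U x ≤ V x ^ p)
    (hV''_ge : ∀ x ∈ Ico a R, exp (U x) ≤ c * deriv (deriv V) x)
    (hV''_le : ∀ x ∈ Ico a R, deriv (deriv V) x ≤ exp (U x)) :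
    ∃ K > 0, ∀ r ∈ Ico a R, exp (U r) ≤ K * V r ^ (2 * p + 1) := by
  have ha : a ∈ Ico a R := ⟨le_rfl, haR⟩
  have hexp := exp_le_add_mul_rpow_mul_deriv hp hc hU hV hV' hV_pos hV'_nonneg hU' hV''_ge
  have hderiv := deriv_le_add_mul_rpow hp hc (exp_pos (U a)).le hV hV' hV_pos
    fun x hx => (hV''_le x hx).trans (hexp x hx)
  set C₁ := exp (U a)
  set C₂ := deriv V a + C₁ * (R - a)
  set m := V a
  have hm : 0 < m := hV_pos a ha
  have hC₂ : 0 ≤ C₂ := add_nonneg (hV'_nonneg a ha) (mul_nonneg (exp_pos _).le (by linarith))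
  have hVm : ∀ r ∈ Ico a R, m ≤ V r := fun r hr =>
    monotoneOn_of_forall_hasDerivAt_nonneg (convex_Ico a R) hV
      (fun x hx => hV'_nonneg x (interior_subset hx)) ha hr hr.1
  refine ⟨C₁ / m ^ (2 * p + 1) + c * C₂ / m ^ (p + 1) + c * (c / (p + 1)), by positivity,
    fun r hr => ?_⟩
  have hVp := rpow_pos_of_pos (hV_pos r hr) p
  have hlow : m ^ (2 * p + 1) ≤ V r ^ (2 * p + 1) :=
    rpow_le_rpow hm.le (hVm r hr) (by linarith)
  have hmid : m ^ (p + 1) * V r ^ p ≤ V r ^ (2 * p + 1) := by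
    simpa [show 2 * p + 1 - p = p + 1 by ring] using
      rpow_sub_mul_rpow_le hm (hVm r hr) (show p ≤ 2 * p + 1 by linarith)
  have hsplit : V r ^ p * V r ^ (p + 1) = V r ^ (2 * p + 1) := by
    rw [← rpow_add (hV_pos r hr)]
    ring_nf
  have hm1 := rpow_pos_of_pos hm (2 * p + 1)
  have hm2 := rpow_pos_of_pos hm (p + 1)
  calc exp (U r) ≤ C₁ + c * (V r ^ p * deriv V r) := hexp r hr
    _ ≤ C₁ + c * (V r ^ p * (C₂ + c / (p + 1) * V r ^ (p + 1))) := by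
        gcongr
        exact hderiv r hr
    _ = C₁ / m ^ (2 * p + 1) * m ^ (2 * p + 1) + c * C₂ / m ^ (p + 1) * (m ^ (p + 1) * V r ^ p)
          + c * (c / (p + 1)) * (V r ^ p * V r ^ (p + 1)) := by
        field_simp
        ring
    _ ≤ _ := by
        rw [hsplit, add_mul, add_mul]
        gcongr

lemma le_neg_log_of_mul_exp_le_deriv {c θ : ℝ} {U : ℝ → ℝ} (hc : 0 < c) (hθ : 0 < θ)
    (hU : ∀ x ∈ Ico a R, HasDerivAt U (deriv U x) x)
    (hU' : ∀ x ∈ Ico a R, c * exp (θ * U x) ≤ deriv U x) :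
    ∀ r ∈ Ico a R, U r ≤ -log (c * θ * (R - r)) / θ := by
  have hd : ∀ x ∈ Ico a R, HasDerivAt (fun r => exp (-(θ * U r)) + c * θ * r)
      (exp (-(θ * U x)) * -(θ * deriv U x) + c * θ) x := fun x hx => by
    refine ((((hU x hx).const_mul θ).neg.exp).add
      ((hasDerivAt_id x).const_mul (c * θ))).congr_deriv ?_
    simp only [Pi.neg_apply]
    ring
  have hanti := antitoneOn_of_forall_hasDerivAt_nonpos (convex_Ico a R) hd fun x hx => by
    have h := mul_le_mul_of_nonneg_left (hU' x (interior_subset hx))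
      (mul_pos hθ (exp_pos (-(θ * U x)))).le
    have : θ * exp (-(θ * U x)) * (c * exp (θ * U x)) = c * θ := by
      rw [mul_mul_mul_comm, ← exp_add]
      simp [mul_comm]
    linarith
  intro r hr
  have hRr : 0 < R - r := sub_pos.2 hr.2
  -- `exp (-θ U r) + cθ r ≥ exp (-θ U r') + cθ r' > cθ r'` for every `r' ∈ (r, R)`
  have hexp : c * θ * (R - r) ≤ exp (-(θ * U r)) := by
    by_contra! hlt
    set r' := r + exp (-(θ * U r)) / (c * θ)
    have hr' : r < r' := lt_add_of_pos_right r (by positivity)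
    have hr'R : r' < R := by
      have : exp (-(θ * U r)) / (c * θ) < R - r := by
        rw [div_lt_iff₀ (by positivity)]
        linarith
      linarith
    have h := hanti hr ⟨hr.1.trans hr'.le, hr'R⟩ hr'.le
    have : c * θ * r' = exp (-(θ * U r)) + c * θ * r := by
      simp only [r']
      field_simp
      ring
    simp only at h
    linarith [exp_pos (-(θ * U r'))]
  have hlog := (log_le_iff_le_exp (by positivity)).2 hexp
  rw [le_div_iff₀ hθ]
  linarith

lemma mul_sub_one_log_le_sq {x : ℝ} (hx : 0 < x) : x * (log x - 1) ≤ x ^ 2 := by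
  nlinarith [log_le_sub_one_of_pos hx]

lemma exists_le_of_deriv_le_sub_mul_log {A B : ℝ} {u : ℝ → ℝ} (hB : 0 ≤ B)
    (hu : ∀ x ∈ Ico a R, HasDerivAt u (deriv u x) x)
    (hu' : ∀ x ∈ Ico a R, deriv u x ≤ A - B * log (R - x)) :
    ∃ M, ∀ r ∈ Ico a R, u r ≤ M := by
  -- `F` is an antiderivative of `A - B log (R - r)` that stays bounded as `r → R`
  set F : ℝ → ℝ := fun r => A * r + B * ((R - r) * (log (R - r) - 1))
  have hF : ∀ x ∈ Ico a R, HasDerivAt (fun r => u r - F r) (deriv u x - (A - B * log (R - x))) x :=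
    fun x hx => by
      have hRx : R - x ≠ 0 := (sub_pos.2 hx.2).ne'
      have hs : HasDerivAt (fun r => R - r) (-1) x := by
        simpa using (hasDerivAt_id x).const_sub R
      refine ((hu x hx).sub (((hasDerivAt_id x).const_mul A).add
        ((hs.mul ((hs.log hRx).sub_const 1)).const_mul B))).congr_deriv ?_
      field_simp
      ring
  have hanti := antitoneOn_of_forall_hasDerivAt_nonpos (convex_Ico a R) hF fun x hx => by
    linarith [hu' x (interior_subset hx)]
  refine ⟨u a - F a + |A| * max |a| |R| + B * (R - a) ^ 2, fun r hr => ?_⟩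
  have h := hanti ⟨le_rfl, hr.1.trans_lt hr.2⟩ hr hr.1
  have hRr : 0 < R - r := sub_pos.2 hr.2
  have hAr : A * r ≤ |A| * max |a| |R| :=
    (le_abs_self _).trans (by rw [abs_mul]; gcongr; exact abs_le_max_abs_abs hr.1 hr.2.le)
  have hlog : (R - r) * (log (R - r) - 1) ≤ (R - a) ^ 2 :=
    (mul_sub_one_log_le_sq hRr).trans (by gcongr; linarith [hr.1])
  have := mul_le_mul_of_nonneg_left hlog hB
  simp only [F] at h
  linarith

lemma exists_le_of_mul_exp_le_deriv_deriv {c θ : ℝ} {u : ℝ → ℝ} (hc : 0 < c) (hθ : 0 < θ)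
    (hu : ∀ x ∈ Ico a R, HasDerivAt u (deriv u x) x)
    (hu' : ∀ x ∈ Ico a R, HasDerivAt (deriv u) (deriv (deriv u) x) x)
    (hu'' : ∀ x ∈ Ico a R, c * exp (θ * deriv u x) ≤ deriv (deriv u) x) :
    ∃ M, ∀ r ∈ Ico a R, u r ≤ M := by
  refine exists_le_of_deriv_le_sub_mul_log (A := -log (c * θ) / θ) (inv_nonneg.2 hθ.le) hu
    fun x hx => ?_
  have h := le_neg_log_of_mul_exp_le_deriv hc hθ hu' hu'' x hx
  rw [log_mul (by positivity) (sub_pos.2 hx.2).ne'] at h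
  calc deriv u x ≤ -(log (c * θ) + log (R - x)) / θ := h
    _ = -log (c * θ) / θ - θ⁻¹ * log (R - x) := by ring

lemma exp_mul_div_rpow_le_rpow {p K y U : ℝ} (hp : 0 < p) (hK : 0 < K) (hy : 0 < y)
    (h : exp U ≤ K * y ^ (2 * p + 1)) :
    exp (p / (2 * p + 1) * U) / K ^ (p / (2 * p + 1)) ≤ y ^ p := by
  calc exp (p / (2 * p + 1) * U) / K ^ (p / (2 * p + 1))
      = (exp U / K) ^ (p / (2 * p + 1)) := by
        rw [div_rpow (exp_pos U).le hK.le, mul_comm, exp_mul]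
    _ ≤ (y ^ (2 * p + 1)) ^ (p / (2 * p + 1)) := by
        gcongr
        rwa [div_le_iff₀' hK]
    _ = y ^ p := by
        rw [← rpow_mul hy.le]
        congr 1
        field_simp

end ODEInequalities

namespace IsPositiveRadialSolExp

variable {N : ℕ} {R p : ℝ} {u v : ℝ → ℝ}

lemma radialPoisson_fst (h : IsPositiveRadialSolExp N R p u v) (hN : 2 ≤ N) (hR : 0 < R) :
    RadialPoisson (N - 1) R u (fun r => v r ^ p) := by
  obtain ⟨hu, -, -, -, -, hequ, -⟩ := h
  refine .of_contDiffOn hR (by omega) hu fun x hx => ?_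
  rw [Nat.cast_pred (by omega)]
  exact hequ x hx

lemma radialPoisson_snd (h : IsPositiveRadialSolExp N R p u v) (hN : 2 ≤ N) (hR : 0 < R) :
    RadialPoisson (N - 1) R v (fun r => exp |deriv u r|) := by
  obtain ⟨-, hv, -, -, -, -, heqv⟩ := h
  refine .of_contDiffOn hR (by omega) hv fun x hx => ?_
  rw [Nat.cast_pred (by omega)]
  exact heqv x hx

lemma pos_snd (h : IsPositiveRadialSolExp N R p u v) {x : ℝ} (hx : x ∈ Ico 0 R) : 0 < v x :=
  (h.2.2.1 x hx).2

lemma deriv_fst_nonneg (h : IsPositiveRadialSolExp N R p u v) (hN : 2 ≤ N) (hR : 0 < R)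
    {x : ℝ} (hx : x ∈ Ioo 0 R) : 0 ≤ deriv u x :=
  (h.radialPoisson_fst hN hR).deriv_nonneg
    (fun _ hy => (rpow_pos_of_pos (h.pos_snd (Ioo_subset_Ico_self hy)) p).le) hx

lemma monotoneOn_fst (h : IsPositiveRadialSolExp N R p u v) (hN : 2 ≤ N) (hR : 0 < R) :
    MonotoneOn u (Ico 0 R) :=
  monotoneOn_Ico_of_deriv_nonneg (h.1.of_le (by norm_num)) fun _ hx => h.deriv_fst_nonneg hN hR hx

lemma deriv_snd_nonneg (h : IsPositiveRadialSolExp N R p u v) (hN : 2 ≤ N) (hR : 0 < R)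
    {x : ℝ} (hx : x ∈ Ioo 0 R) : 0 ≤ deriv v x :=
  (h.radialPoisson_snd hN hR).deriv_nonneg (fun _ _ => (exp_pos _).le) hx

lemma monotoneOn_snd (h : IsPositiveRadialSolExp N R p u v) (hN : 2 ≤ N) (hR : 0 < R) :
    MonotoneOn v (Ico 0 R) :=
  monotoneOn_Ico_of_deriv_nonneg (h.2.1.of_le (by norm_num)) fun _ hx => h.deriv_snd_nonneg hN hR hx

lemma rpow_div_le_deriv_deriv_fst (h : IsPositiveRadialSolExp N R p u v) (hN : 2 ≤ N)
    (hR : 0 < R) (hp : 0 < p) {x : ℝ} (hx : x ∈ Ioo 0 R) :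
    v x ^ p / N ≤ deriv (deriv u) x := by
  have hmono : MonotoneOn (fun r => v r ^ p) (Ioo 0 R) := fun y hy z hz hyz =>
    rpow_le_rpow (h.pos_snd (Ioo_subset_Ico_self hy)).le
      (h.monotoneOn_snd hN hR (Ioo_subset_Ico_self hy) (Ioo_subset_Ico_self hz) hyz) hp.le
  simpa [Nat.cast_pred (show 0 < N by omega)] using
    (h.radialPoisson_fst hN hR).div_le_deriv_deriv hmono hx

lemma deriv_deriv_fst_le (h : IsPositiveRadialSolExp N R p u v) (hN : 2 ≤ N) (hR : 0 < R)
    {x : ℝ} (hx : x ∈ Ioo 0 R) : deriv (deriv u) x ≤ v x ^ p :=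
  (h.radialPoisson_fst hN hR).deriv_deriv_le
    (fun _ hy => (rpow_pos_of_pos (h.pos_snd (Ioo_subset_Ico_self hy)) p).le) hx

lemma monotoneOn_deriv_fst (h : IsPositiveRadialSolExp N R p u v) (hN : 2 ≤ N) (hR : 0 < R)
    (hp : 0 < p) : MonotoneOn (deriv u) (Ioo 0 R) :=
  monotoneOn_of_forall_hasDerivAt_nonneg (convex_Ioo 0 R)
    (h.radialPoisson_fst hN hR).hasDerivAt_deriv fun x hx => by
      rw [interior_Ioo] at hx
      exact (div_nonneg (rpow_pos_of_pos (h.pos_snd (Ioo_subset_Ico_self hx)) p).le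
        N.cast_nonneg).trans (h.rpow_div_le_deriv_deriv_fst hN hR hp hx)

lemma exp_div_le_deriv_deriv_snd (h : IsPositiveRadialSolExp N R p u v) (hN : 2 ≤ N)
    (hR : 0 < R) (hp : 0 < p) {x : ℝ} (hx : x ∈ Ioo 0 R) :
    exp (deriv u x) / N ≤ deriv (deriv v) x := by
  have hmono : MonotoneOn (fun r => exp |deriv u r|) (Ioo 0 R) := fun y hy z hz hyz => by
    simp only [abs_of_nonneg (h.deriv_fst_nonneg hN hR hy),
      abs_of_nonneg (h.deriv_fst_nonneg hN hR hz), exp_le_exp]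
    exact h.monotoneOn_deriv_fst hN hR hp hy hz hyz
  simpa [Nat.cast_pred (show 0 < N by omega), abs_of_nonneg (h.deriv_fst_nonneg hN hR hx)] using
    (h.radialPoisson_snd hN hR).div_le_deriv_deriv hmono hx

lemma deriv_deriv_snd_le (h : IsPositiveRadialSolExp N R p u v) (hN : 2 ≤ N) (hR : 0 < R)
    {x : ℝ} (hx : x ∈ Ioo 0 R) : deriv (deriv v) x ≤ exp (deriv u x) := by
  simpa [abs_of_nonneg (h.deriv_fst_nonneg hN hR hx)] using
    (h.radialPoisson_snd hN hR).deriv_deriv_le (fun _ _ => (exp_pos _).le) hx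

lemma exists_le_fst (h : IsPositiveRadialSolExp N R p u v) (hN : 2 ≤ N) (hR : 0 < R)
    (hp : 0 < p) : ∃ M, ∀ r ∈ Ico 0 R, u r ≤ M := by
  have hsub : Ico (R / 2) R ⊆ Ioo 0 R := fun x hx => ⟨by linarith [hx.1], hx.2⟩
  have hN0 : (0 : ℝ) < N := Nat.cast_pos.2 (by omega)
  have hu : ∀ x ∈ Ico (R / 2) R, HasDerivAt u (deriv u x) x := fun x hx =>
    (h.1.of_le (by norm_num)).hasDerivAt_deriv (Ico_mem_nhds (hsub hx).1 (hsub hx).2)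
  have hv : ∀ x ∈ Ico (R / 2) R, HasDerivAt v (deriv v x) x := fun x hx =>
    (h.2.1.of_le (by norm_num)).hasDerivAt_deriv (Ico_mem_nhds (hsub hx).1 (hsub hx).2)
  obtain ⟨K, hK, hexp⟩ := exists_exp_le_mul_rpow (by linarith) hp.le N.cast_nonneg
    (fun x hx => (h.radialPoisson_fst hN hR).hasDerivAt_deriv x (hsub hx)) hv
    (fun x hx => (h.radialPoisson_snd hN hR).hasDerivAt_deriv x (hsub hx))
    (fun x hx => h.pos_snd (Ioo_subset_Ico_self (hsub hx)))
    (fun x hx => h.deriv_snd_nonneg hN hR (hsub hx))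
    (fun x hx => h.deriv_deriv_fst_le hN hR (hsub hx))
    (fun x hx => (div_le_iff₀' hN0).1 (h.exp_div_le_deriv_deriv_snd hN hR hp (hsub hx)))
    (fun x hx => h.deriv_deriv_snd_le hN hR (hsub hx))
  -- `exp u' ≲ v ^ (2p+1)` and `u'' ≳ v ^ p` give `u'' ≳ exp (θ u')` with `θ = p / (2p+1)`
  obtain ⟨M, hM⟩ := exists_le_of_mul_exp_le_deriv_deriv
    (c := 1 / (N * K ^ (p / (2 * p + 1)))) (θ := p / (2 * p + 1)) (by positivity) (by positivity) hu
    (fun x hx => (h.radialPoisson_fst hN hR).hasDerivAt_deriv x (hsub hx)) fun x hx => by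
      calc 1 / (N * K ^ (p / (2 * p + 1))) * exp (p / (2 * p + 1) * deriv u x)
          = exp (p / (2 * p + 1) * deriv u x) / K ^ (p / (2 * p + 1)) / N := by ring
        _ ≤ v x ^ p / N := by
          gcongr
          exact exp_mul_div_rpow_le_rpow hp hK (h.pos_snd (Ioo_subset_Ico_self (hsub hx)))
            (hexp x hx)
        _ ≤ deriv (deriv u) x := h.rpow_div_le_deriv_deriv_fst hN hR hp (hsub hx)
  refine ⟨M, fun r hr => ?_⟩
  rcases le_or_gt (R / 2) r with hr' | hr'
  · exact hM r ⟨hr', hr.2⟩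
  · exact (h.monotoneOn_fst hN hR hr ⟨by linarith, by linarith⟩ hr'.le).trans
      (hM (R / 2) ⟨le_rfl, by linarith⟩)

end IsPositiveRadialSolExp

/-- Every positive radial solution of `Δu = v^p`, `Δv = e^{|∇u|}` in `B_R` is either bounded,
or has `u` bounded and `v(r) → ∞` as `r → R⁻`; in particular `u` is always bounded. -/
theorem exp_system_dichotomy (N : ℕ) (hN : 2 ≤ N) (R p : ℝ) (hR : 0 < R) (hp : 0 < p)
    (u v : ℝ → ℝ) (huv : IsPositiveRadialSolExp N R p u v) :
    ((∃ M, ∀ r ∈ Set.Ico (0:ℝ) R, u r ≤ M) ∧ (∃ M, ∀ r ∈ Set.Ico (0:ℝ) R, v r ≤ M)) ∨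
      ((∃ M, ∀ r ∈ Set.Ico (0:ℝ) R, u r ≤ M) ∧
        Tendsto v (nhdsWithin R (Set.Iio R)) atTop) := by
  have hu := huv.exists_le_fst hN hR hp
  by_cases hv : ∃ M, ∀ r ∈ Ico 0 R, v r ≤ M
  · exact .inl ⟨hu, hv⟩
  · exact .inr ⟨hu, tendsto_nhdsLT_atTop_of_monotoneOn (huv.monotoneOn_snd hN hR) hv⟩
end

section
/- Let p > 0 and let f : [0,∞) → ℝ be a C¹, nondecreasing function with f(t) > 0 for all t > 0, and set F(s) = ∫₀^s f(t) dt. Then ∫₁^∞ (∫₀^s F(t) dt)^(−p/(2p+1)) ds < ∞ if and only if ∫₁^∞ (∫₀^s √(f(t)) dt)^(−2p/(2p+1)) ds < ∞. -/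
open MeasureTheory Set

/-!
For a nondecreasing `g ≥ 0` on `[0, ∞)` the primitive is pinched between two values of `g`:
`(s/2) g(s/2) ≤ ∫₀^s g ≤ s g(s)`. Applied to `f`, `F` and `√f`, this makes both
`G(s) = ∫₀^s F` and `H(s)² = (∫₀^s √f)²` comparable to `s² f(s)` up to rescaling `s` by a constant:
`G(s/2) ≤ H(s)²` and `H(s/4)² ≤ G(s)`. Both integrands are monotone, and a dilation of the variable
does not affect integrability on a half-line.
-/

section MonotonePrimitive

variable {g : ℝ → ℝ} {a b s : ℝ}

lemma MonotoneOn.intervalIntegrable_of_nonneg (hg : MonotoneOn g (Ici 0)) (ha : 0 ≤ a)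
    (hb : 0 ≤ b) : IntervalIntegrable g volume a b :=
  (hg.mono fun _ hx => le_trans (le_inf ha hb) hx.1).intervalIntegrable

lemma MonotoneOn.integral_le_mul (hg : MonotoneOn g (Ici 0)) (ha : 0 ≤ a) :
    ∫ t in (0 : ℝ)..a, g t ≤ a * g a := by
  simpa using intervalIntegral.integral_mono_on ha (hg.intervalIntegrable_of_nonneg le_rfl ha)
    intervalIntegrable_const fun x hx => hg hx.1 ha hx.2

lemma integral_nonneg_of_nonneg_on_Ioi (hg : ∀ t, 0 < t → 0 ≤ g t) (ha : 0 ≤ a) (hab : a ≤ b) :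
    0 ≤ ∫ t in a..b, g t := by
  rw [intervalIntegral.integral_of_le hab]
  exact setIntegral_nonneg measurableSet_Ioc fun t ht => hg t (ha.trans_lt ht.1)

lemma MonotoneOn.half_mul_le_integral (hg : MonotoneOn g (Ici 0))
    (hg0 : ∀ t, 0 < t → 0 ≤ g t) (hs : 0 ≤ s) :
    s / 2 * g (s / 2) ≤ ∫ t in (0 : ℝ)..s, g t := by
  have hs2 : 0 ≤ s / 2 := by positivity
  have h_left : 0 ≤ ∫ t in (0 : ℝ)..s / 2, g t :=
    integral_nonneg_of_nonneg_on_Ioi hg0 le_rfl hs2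
  have h_right : s / 2 * g (s / 2) ≤ ∫ t in s / 2..s, g t := by
    have := intervalIntegral.integral_mono_on (by linarith) intervalIntegrable_const
      (hg.intervalIntegrable_of_nonneg hs2 hs) fun t ht => hg hs2 (hs2.trans ht.1) ht.1
    simpa [show s - s / 2 = s / 2 by ring] using this
  rw [← intervalIntegral.integral_add_adjacent_intervals
    (hg.intervalIntegrable_of_nonneg le_rfl hs2) (hg.intervalIntegrable_of_nonneg hs2 hs)]
  linarith

lemma MonotoneOn.integral_pos (hg : MonotoneOn g (Ici 0)) (hg0 : ∀ t, 0 < t → 0 < g t)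
    (hs : 0 < s) : 0 < ∫ t in (0 : ℝ)..s, g t :=
  (mul_pos (half_pos hs) (hg0 _ (half_pos hs))).trans_le
    (hg.half_mul_le_integral (fun t ht => (hg0 t ht).le) hs.le)

lemma MonotoneOn.monotoneOn_integral (hg : MonotoneOn g (Ici 0))
    (hg0 : ∀ t, 0 < t → 0 ≤ g t) : MonotoneOn (fun s => ∫ t in (0 : ℝ)..s, g t) (Ici 0) := by
  intro x hx y hy hxy
  dsimp only
  rw [← intervalIntegral.integral_add_adjacent_intervals
    (hg.intervalIntegrable_of_nonneg le_rfl hx) (hg.intervalIntegrable_of_nonneg hx hy)]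
  linarith [integral_nonneg_of_nonneg_on_Ioi hg0 hx hxy]

end MonotonePrimitive

section IntegrabilityOnHalfLine

variable {φ ψ : ℝ → ℝ}

lemma MonotoneOn.antitoneOn_rpow_neg {G : ℝ → ℝ} {q : ℝ} (hG : MonotoneOn G (Ioi 0))
    (hG0 : ∀ s, 0 < s → 0 < G s) (hq : 0 ≤ q) : AntitoneOn (fun s => G s ^ (-q)) (Ioi 0) :=
  fun a ha _ hb hab => Real.rpow_le_rpow_of_nonpos (hG0 a ha) (hG ha hb hab) (neg_nonpos.2 hq)

lemma AntitoneOn.integrableOn_Ici_of_le (hφ : AntitoneOn φ (Ioi 0)) {a b : ℝ} (ha : 0 < a)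
    (hab : a ≤ b) (h : IntegrableOn φ (Ici b)) : IntegrableOn φ (Ici a) := by
  rw [← Icc_union_Ici_eq_Ici hab]
  exact ((hφ.mono fun _ hx => ha.trans_le hx.1).integrableOn_isCompact isCompact_Icc).union h

lemma AntitoneOn.integrableOn_Ici_iff (hφ : AntitoneOn φ (Ioi 0)) {a b : ℝ} (ha : 0 < a)
    (hb : 0 < b) : IntegrableOn φ (Ici a) ↔ IntegrableOn φ (Ici b) := by
  rcases le_total a b with hab | hba
  · exact ⟨(·.mono_set (Ici_subset_Ici.2 hab)), hφ.integrableOn_Ici_of_le ha hab⟩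
  · exact ⟨hφ.integrableOn_Ici_of_le hb hba, (·.mono_set (Ici_subset_Ici.2 hba))⟩

lemma integrableOn_Ici_one_of_le_div {c : ℝ} (hc : 0 < c) (hφ : AntitoneOn φ (Ioi 0))
    (hψ : AntitoneOn ψ (Ioi 0)) (hψ0 : ∀ s, 0 < s → 0 ≤ ψ s)
    (hle : ∀ s, 0 < s → ψ s ≤ φ (s / c)) (h : IntegrableOn φ (Ici 1)) :
    IntegrableOn ψ (Ici 1) := by
  have hφc : IntegrableOn (fun s => φ (c⁻¹ * s)) (Ioi 1) := by
    rw [integrableOn_Ioi_comp_mul_left_iff φ 1 (inv_pos.2 hc), mul_one]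
    exact ((hφ.integrableOn_Ici_iff one_pos (inv_pos.2 hc)).1 h).mono_set Ioi_subset_Ici_self
  rw [integrableOn_Ici_iff_integrableOn_Ioi]
  refine hφc.mono' ?_ ?_
  · exact (aemeasurable_restrict_of_antitoneOn measurableSet_Ioi
      (hψ.mono fun _ hs => one_pos.trans hs)).aestronglyMeasurable
  · filter_upwards [ae_restrict_mem measurableSet_Ioi] with s hs
    have hs0 : 0 < s := one_pos.trans hs
    rw [Real.norm_of_nonneg (hψ0 s hs0), ← div_eq_inv_mul]
    exact hle s hs0

end IntegrabilityOnHalfLine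

section KellerOsserman

variable {f : ℝ → ℝ} {s : ℝ}

lemma integral_integral_half_le_sq_integral_sqrt (hf : MonotoneOn f (Ici 0))
    (hf0 : ∀ t, 0 < t → 0 < f t) (hs : 0 < s) :
    ∫ t in (0 : ℝ)..s / 2, ∫ x in (0 : ℝ)..t, f x ≤ (∫ t in (0 : ℝ)..s, √(f t)) ^ 2 := by
  have hs2 : 0 < s / 2 := half_pos hs
  have hF := hf.monotoneOn_integral fun t ht => (hf0 t ht).le
  have hsqrt : MonotoneOn (fun t => √(f t)) (Ici 0) := Real.sqrt_monotone.comp_monotoneOn hf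
  calc ∫ t in (0 : ℝ)..s / 2, ∫ x in (0 : ℝ)..t, f x
      ≤ s / 2 * ∫ x in (0 : ℝ)..s / 2, f x := hF.integral_le_mul hs2.le
    _ ≤ s / 2 * (s / 2 * f (s / 2)) :=
      mul_le_mul_of_nonneg_left (hf.integral_le_mul hs2.le) hs2.le
    _ = (s / 2 * √(f (s / 2))) ^ 2 := by rw [mul_pow, Real.sq_sqrt (hf0 _ hs2).le]; ring
    _ ≤ (∫ t in (0 : ℝ)..s, √(f t)) ^ 2 :=
      pow_le_pow_left₀ (by positivity)
        (hsqrt.half_mul_le_integral (fun _ _ => Real.sqrt_nonneg _) hs.le) 2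

lemma sq_integral_sqrt_quarter_le_integral_integral (hf : MonotoneOn f (Ici 0))
    (hf0 : ∀ t, 0 < t → 0 < f t) (hs : 0 < s) :
    (∫ t in (0 : ℝ)..s / 4, √(f t)) ^ 2 ≤ ∫ t in (0 : ℝ)..s, ∫ x in (0 : ℝ)..t, f x := by
  have hs4 : 0 < s / 4 := by positivity
  have hF := hf.monotoneOn_integral fun t ht => (hf0 t ht).le
  have hsqrt : MonotoneOn (fun t => √(f t)) (Ici 0) := Real.sqrt_monotone.comp_monotoneOn hf
  calc (∫ t in (0 : ℝ)..s / 4, √(f t)) ^ 2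
      ≤ (s / 4 * √(f (s / 4))) ^ 2 :=
        pow_le_pow_left₀ (integral_nonneg_of_nonneg_on_Ioi (fun _ _ => Real.sqrt_nonneg _)
          le_rfl hs4.le) (hsqrt.integral_le_mul hs4.le) 2
    _ = s / 4 * (s / 4 * f (s / 4)) := by rw [mul_pow, Real.sq_sqrt (hf0 _ hs4).le]; ring
    _ ≤ s / 2 * (s / 2 / 2 * f (s / 2 / 2)) := by
      rw [show s / 2 / 2 = s / 4 by ring]
      exact mul_le_mul_of_nonneg_right (by linarith) (mul_pos hs4 (hf0 _ hs4)).le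
    _ ≤ s / 2 * ∫ x in (0 : ℝ)..s / 2, f x :=
      mul_le_mul_of_nonneg_left (hf.half_mul_le_integral (fun t ht => (hf0 t ht).le)
        (half_pos hs).le) (half_pos hs).le
    _ ≤ ∫ t in (0 : ℝ)..s, ∫ x in (0 : ℝ)..t, f x :=
      hF.half_mul_le_integral (fun t ht => integral_nonneg_of_nonneg_on_Ioi
        (fun x hx => (hf0 x hx).le) le_rfl ht.le) hs.le

theorem integrableOn_rpow_integral_integral_iff (hf : MonotoneOn f (Ici 0))
    (hf0 : ∀ t, 0 < t → 0 < f t) {q : ℝ} (hq : 0 ≤ q) :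
    IntegrableOn (fun s => (∫ t in (0 : ℝ)..s, ∫ x in (0 : ℝ)..t, f x) ^ (-q)) (Ici 1) ↔
      IntegrableOn (fun s => (∫ t in (0 : ℝ)..s, √(f t)) ^ (-(2 * q))) (Ici 1) := by
  have hF := hf.monotoneOn_integral fun t ht => (hf0 t ht).le
  have hG := hF.monotoneOn_integral fun t ht => (hf.integral_pos hf0 ht).le
  have hG0 : ∀ s, 0 < s → 0 < ∫ t in (0 : ℝ)..s, ∫ x in (0 : ℝ)..t, f x :=
    fun _ => hF.integral_pos fun _ => hf.integral_pos hf0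
  have hsqrt : MonotoneOn (fun t => √(f t)) (Ici 0) := Real.sqrt_monotone.comp_monotoneOn hf
  have hH := hsqrt.monotoneOn_integral fun _ _ => Real.sqrt_nonneg _
  have hH0 : ∀ s, 0 < s → 0 < ∫ t in (0 : ℝ)..s, √(f t) :=
    fun _ => hsqrt.integral_pos fun t ht => Real.sqrt_pos.2 (hf0 t ht)
  have hΦ := (hG.mono Ioi_subset_Ici_self).antitoneOn_rpow_neg hG0 hq
  have hΨ := (hH.mono Ioi_subset_Ici_self).antitoneOn_rpow_neg hH0 (by positivity : 0 ≤ 2 * q)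
  have hsq : ∀ s, 0 < s → (∫ t in (0 : ℝ)..s, √(f t)) ^ (-(2 * q)) =
      ((∫ t in (0 : ℝ)..s, √(f t)) ^ 2) ^ (-q) := fun s hs => by
    rw [← Real.rpow_natCast, ← Real.rpow_mul (hH0 s hs).le]; push_cast; ring_nf
  constructor
  · refine integrableOn_Ici_one_of_le_div two_pos hΦ hΨ
      (fun s hs => Real.rpow_nonneg (hH0 s hs).le _) fun s hs => ?_
    rw [hsq s hs]
    exact Real.rpow_le_rpow_of_nonpos (hG0 _ (half_pos hs))
      (integral_integral_half_le_sq_integral_sqrt hf hf0 hs) (neg_nonpos.2 hq)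
  · refine integrableOn_Ici_one_of_le_div four_pos hΨ hΦ
      (fun s hs => Real.rpow_nonneg (hG0 s hs).le _) fun s hs => ?_
    rw [hsq _ (by positivity)]
    exact Real.rpow_le_rpow_of_nonpos (pow_pos (hH0 _ (by positivity)) 2)
      (sq_integral_sqrt_quarter_le_integral_integral hf hf0 hs) (neg_nonpos.2 hq)

end KellerOsserman

theorem keller_osserman_equivalence_general (p : ℝ) (hp : 0 < p)
    (f : ℝ → ℝ)
    (hfmono : ∀ s t : ℝ, 0 ≤ s → s ≤ t → f s ≤ f t)
    (hfpos : ∀ t : ℝ, 0 < t → 0 < f t) :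
    IntegrableOn
        (fun s : ℝ => (∫ t in (0:ℝ)..s, ∫ x in (0:ℝ)..t, f x) ^ (-(p / (2 * p + 1))))
        (Set.Ici (1:ℝ)) ↔
      IntegrableOn
        (fun s : ℝ => (∫ t in (0:ℝ)..s, Real.sqrt (f t)) ^ (-(2 * p / (2 * p + 1))))
        (Set.Ici (1:ℝ)) := by
  rw [show 2 * p / (2 * p + 1) = 2 * (p / (2 * p + 1)) by ring]
  exact integrableOn_rpow_integral_integral_iff (fun s hs t _ hst => hfmono s t hs hst) hfpos
    (by positivity)

/-- For `f : [0,∞) → ℝ` a `C¹` nondecreasing function with `f > 0` on `(0,∞)` and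
`F(s) = ∫₀^s f(t) dt`, one has `∫₁^∞ (∫₀^s F(t) dt)^(-p/(2p+1)) ds < ∞` if and only if
`∫₁^∞ (∫₀^s √(f(t)) dt)^(-2p/(2p+1)) ds < ∞`. -/
theorem keller_osserman_equivalence (p : ℝ) (hp : 0 < p)
    (f : ℝ → ℝ) (hf : ContDiffOn ℝ 1 f (Set.Ici 0))
    (hfmono : ∀ s t : ℝ, 0 ≤ s → s ≤ t → f s ≤ f t)
    (hfpos : ∀ t : ℝ, 0 < t → 0 < f t) :
    IntegrableOn
        (fun s : ℝ => (∫ t in (0:ℝ)..s, ∫ x in (0:ℝ)..t, f x) ^ (-(p / (2 * p + 1))))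
        (Set.Ici (1:ℝ)) ↔
      IntegrableOn
        (fun s : ℝ => (∫ t in (0:ℝ)..s, Real.sqrt (f t)) ^ (-(2 * p / (2 * p + 1))))
        (Set.Ici (1:ℝ)) :=
  keller_osserman_equivalence_general p hp f hfmono hfpos
end

section
/- Let f : [0,∞) → ℝ be a continuous, nondecreasing, nonnegative function and set F(s) = ∫₀^s f(t) dt. Then for every s ≥ 0 one has 2 ∫₀^s F(t) dt ≤ ( ∫₀^s √(f(t)) dt )². -/
/-!
With `G(t) = ∫ₐᵗ √f`, the function `t ↦ G(t)² - 2 ∫ₐᵗ ∫ₐʳ f` vanishes at `a` and has derivative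
`2 (√f(t) G(t) - ∫ₐᵗ f)`. This is nonnegative because `f = √f · √f ≤ √f · √f(t)` on `[a, t]`
by monotonicity, so the function is nondecreasing.
-/

open MeasureTheory Set intervalIntegral

section

variable {a b : ℝ}

lemma continuousOn_primitive_of_continuousOn {u : ℝ → ℝ} (hab : a ≤ b)
    (hu : ContinuousOn u (Icc a b)) : ContinuousOn (fun x => ∫ y in a..x, u y) (Icc a b) := by
  simpa only [uIcc_of_le hab] using
    continuousOn_primitive_interval (μ := volume) (hu.integrableOn_Icc.mono_set (uIcc_of_le hab).le)

lemma hasDerivAt_primitive_of_continuousOn {u : ℝ → ℝ} {t : ℝ} (hu : ContinuousOn u (Icc a b))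
    (ht : t ∈ Ioo a b) : HasDerivAt (fun x => ∫ y in a..x, u y) (u t) t :=
  integral_hasDerivAt_right
    ((hu.mono (Icc_subset_Icc_right ht.2.le)).intervalIntegrable_of_Icc ht.1.le)
    ((hu.mono Ioo_subset_Icc_self).stronglyMeasurableAtFilter isOpen_Ioo t ht)
    (hu.continuousAt (Icc_mem_nhds ht.1 ht.2))

lemma integral_le_sqrt_mul_integral_sqrt {f : ℝ → ℝ} (hab : a ≤ b)
    (hmono : MonotoneOn f (Icc a b)) (hnn : ∀ x ∈ Icc a b, 0 ≤ f x) :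
    ∫ x in a..b, f x ≤ √(f b) * ∫ x in a..b, √(f x) := by
  have hsqrt : MonotoneOn (fun x => √(f x)) (Icc a b) :=
    fun x hx y hy hxy => Real.sqrt_le_sqrt (hmono hx hy hxy)
  rw [← intervalIntegral.integral_const_mul]
  refine integral_mono_on hab (uIcc_of_le hab ▸ hmono).intervalIntegrable
    ((uIcc_of_le hab ▸ hsqrt).intervalIntegrable.const_mul _) fun x hx => ?_
  calc f x = √(f x) * √(f x) := (Real.mul_self_sqrt (hnn x hx)).symm
    _ ≤ √(f b) * √(f x) :=
      mul_le_mul_of_nonneg_right (hsqrt hx (right_mem_Icc.2 hab) hx.2) (Real.sqrt_nonneg _)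

theorem two_mul_integral_primitive_le_sq_integral_sqrt {f : ℝ → ℝ} (hab : a ≤ b)
    (hf : ContinuousOn f (Icc a b)) (hmono : MonotoneOn f (Icc a b))
    (hnn : ∀ x ∈ Icc a b, 0 ≤ f x) :
    2 * ∫ t in a..b, ∫ x in a..t, f x ≤ (∫ t in a..b, √(f t)) ^ 2 := by
  set F : ℝ → ℝ := fun t => ∫ x in a..t, f x
  set G : ℝ → ℝ := fun t => ∫ x in a..t, √(f x)
  set P : ℝ → ℝ := fun t => ∫ x in a..t, F x
  have hsqrt : ContinuousOn (fun x => √(f x)) (Icc a b) := hf.sqrt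
  have hF : ContinuousOn F (Icc a b) := continuousOn_primitive_of_continuousOn hab hf
  have hdiff : MonotoneOn (fun t => G t ^ 2 - 2 * P t) (Icc a b) := by
    refine monotoneOn_of_hasDerivWithinAt_nonneg (f' := fun t => 2 * G t ^ 1 * √(f t) - 2 * F t)
      (convex_Icc a b)
      (((continuousOn_primitive_of_continuousOn hab hsqrt).pow 2).sub
        (continuousOn_const.mul (continuousOn_primitive_of_continuousOn hab hF)))
      (fun t ht => ?_) (fun t ht => ?_) <;> rw [interior_Icc] at ht
    · exact (((hasDerivAt_primitive_of_continuousOn hsqrt ht).pow 2).sub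
        ((hasDerivAt_primitive_of_continuousOn hF ht).const_mul 2)).hasDerivWithinAt
    · have hsub : Icc a t ⊆ Icc a b := Icc_subset_Icc_right ht.2.le
      have hFt := integral_le_sqrt_mul_integral_sqrt ht.1.le (hmono.mono hsub)
        fun x hx => hnn x (hsub hx)
      simp only [pow_one]
      linarith
  have hends := hdiff (left_mem_Icc.2 hab) (right_mem_Icc.2 hab) hab
  simp only [G, P, integral_same] at hends
  linarith

end

/-- For `f : [0,∞) → ℝ` continuous, nondecreasing and nonnegative, with
`F(s) = ∫₀^s f(t) dt`, one has `2 ∫₀^s F(t) dt ≤ (∫₀^s √(f(t)) dt)²` for all `s ≥ 0`. -/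
theorem two_int_F_le_sq_int_sqrt (f : ℝ → ℝ) (hfc : ContinuousOn f (Set.Ici 0))
    (hfmono : ∀ s t : ℝ, 0 ≤ s → s ≤ t → f s ≤ f t)
    (hfnn : ∀ t : ℝ, 0 ≤ t → 0 ≤ f t)
    (s : ℝ) (hs : 0 ≤ s) :
    2 * ∫ t in (0:ℝ)..s, (∫ x in (0:ℝ)..t, f x) ≤
      (∫ t in (0:ℝ)..s, Real.sqrt (f t)) ^ 2 :=
  two_mul_integral_primitive_le_sq_integral_sqrt hs (hfc.mono Icc_subset_Ici_self)
    (fun x hx y _ hxy => hfmono x y hx.1 hxy) (fun x hx => hfnn x hx.1)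
end

section
/- Let f : [0,∞) → ℝ be a continuous, nondecreasing, nonnegative function and set F(s) = ∫₀^s f(t) dt. Then for every s ≥ 0 one has ( ∫₀^s √(f(t)) dt )² ≤ ∫₀^{2s} F(t) dt. -/
open MeasureTheory Set

/-- For `f : [0,∞) → ℝ` continuous, nondecreasing and nonnegative, with
`F(s) = ∫₀^s f(t) dt`, one has `(∫₀^s √(f(t)) dt)² ≤ ∫₀^{2s} F(t) dt` for all `s ≥ 0`. -/
theorem sq_int_sqrt_le_int_F_two_mul (f : ℝ → ℝ) (hfc : ContinuousOn f (Set.Ici 0))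
    (hfmono : ∀ s t : ℝ, 0 ≤ s → s ≤ t → f s ≤ f t)
    (hfnn : ∀ t : ℝ, 0 ≤ t → 0 ≤ f t)
    (s : ℝ) (hs : 0 ≤ s) :
    (∫ t in (0:ℝ)..s, Real.sqrt (f t)) ^ 2 ≤
      ∫ t in (0:ℝ)..(2 * s), (∫ x in (0:ℝ)..t, f x) := by
  have hfint : ∀ a b : ℝ, 0 ≤ a → a ≤ b → IntervalIntegrable f volume a b := by
    intro a b ha hab
    apply ContinuousOn.intervalIntegrable
    apply hfc.mono
    rw [Set.uIcc_of_le hab]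
    exact fun x hx => le_trans ha hx.1
  set F : ℝ → ℝ := fun t => ∫ x in (0:ℝ)..t, f x with hF
  have hFmono : ∀ a b : ℝ, 0 ≤ a → a ≤ b → F a ≤ F b := by
    intro a b ha hab
    have h1 := intervalIntegral.integral_add_adjacent_intervals
      (hfint 0 a le_rfl ha) (hfint a b ha hab)
    have h2 : 0 ≤ ∫ x in a..b, f x :=
      intervalIntegral.integral_nonneg hab (fun u hu => hfnn u (le_trans ha hu.1))
    simp only [hF]
    linarith [h1, h2]
  have hFnonneg : ∀ a : ℝ, 0 ≤ a → 0 ≤ F a := fun a ha =>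
    intervalIntegral.integral_nonneg ha (fun u hu => hfnn u hu.1)
  set A := ∫ t in (0:ℝ)..s, Real.sqrt (f t) with hA
  have hAnn : 0 ≤ A := intervalIntegral.integral_nonneg hs fun u _ => Real.sqrt_nonneg _
  have hsqrtint : IntervalIntegrable (fun t => Real.sqrt (f t)) volume 0 s := by
    apply ContinuousOn.intervalIntegrable
    apply ContinuousOn.sqrt
    apply hfc.mono
    rw [Set.uIcc_of_le hs]; exact fun x hx => hx.1
  have key : ∀ c : ℝ, 0 ≤ s * (c * c) + (-(2 * A)) * c + F s := by
    intro c
    rcases le_or_gt c 0 with hc | hc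
    · have h1 := hFnonneg s hs
      nlinarith [mul_nonneg hs (mul_self_nonneg c), mul_nonneg hAnn (neg_nonneg.mpr hc)]
    · have hint : ∫ t in (0:ℝ)..s, (2 * c) * Real.sqrt (f t)
          ≤ ∫ t in (0:ℝ)..s, (f t + c ^ 2) := by
        apply intervalIntegral.integral_mono_on hs (hsqrtint.const_mul _)
          ((hfint 0 s le_rfl hs).add intervalIntegrable_const)
        intro t ht
        nlinarith [Real.sq_sqrt (hfnn t ht.1), sq_nonneg (Real.sqrt (f t) - c)]
      rw [intervalIntegral.integral_const_mul,
        intervalIntegral.integral_add (hfint 0 s le_rfl hs) intervalIntegrable_const,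
        intervalIntegral.integral_const] at hint
      simp only [smul_eq_mul, sub_zero, ← hA, ← hF] at hint
      nlinarith
  have disc := discrim_le_zero key
  rw [discrim] at disc
  have step1 : A ^ 2 ≤ s * F s := by nlinarith
  have hFintegrable : IntervalIntegrable F volume s (2 * s) := by
    apply MonotoneOn.intervalIntegrable
    rw [Set.uIcc_of_le (by linarith)]
    intro a ha b hb hab
    exact hFmono a b (le_trans hs ha.1) hab
  have step2 : s * F s ≤ ∫ t in s..(2 * s), F t := by
    have h : ∫ t in s..(2 * s), F s ≤ ∫ t in s..(2 * s), F t := by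
      apply intervalIntegral.integral_mono_on (by linarith) intervalIntegrable_const hFintegrable
      intro t ht
      exact hFmono s t hs ht.1
    rwa [intervalIntegral.integral_const, smul_eq_mul, show 2 * s - s = s by ring] at h
  have hFintegrable0 : IntervalIntegrable F volume 0 s := by
    apply MonotoneOn.intervalIntegrable
    rw [Set.uIcc_of_le hs]
    intro a ha b hb hab
    exact hFmono a b ha.1 hab
  have step3 : 0 ≤ ∫ t in (0:ℝ)..s, F t :=
    intervalIntegral.integral_nonneg hs fun u hu => hFnonneg u hu.1
  have split := intervalIntegral.integral_add_adjacent_intervals hFintegrable0 hFintegrable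
  calc A ^ 2 ≤ s * F s := step1
    _ ≤ ∫ t in s..(2 * s), F t := step2
    _ ≤ ∫ t in (0:ℝ)..(2 * s), F t := by rw [← split]; linarith
end

section
/- Let θ ≥ 0, p > 0 and q ≥ 1, and let R₁, R₂ > 0. Let (w₁, v₁, ψ₁) be nonnegative continuous functions on [0,R₁), differentiable on (0,R₁), satisfying w₁'(r) + (θ/r) w₁(r) ≥ v₁(r)^p, v₁'(r) ≥ ψ₁(r), ψ₁'(r) + (θ/r) ψ₁(r) ≥ w₁(r)^q for 0 < r < R₁, with w₁(0) = μ₁, v₁(0) = m₁, ψ₁(0) = ν₁, and let (w₂, v₂, ψ₂) be nonnegative continuous functions on [0,R₂), differentiable on (0,R₂), satisfying the reversed inequalities w₂'(r) + (θ/r) w₂(r) ≤ v₂(r)^p, v₂'(r) ≤ ψ₂(r), ψ₂'(r) + (θ/r) ψ₂(r) ≤ w₂(r)^q for 0 < r < R₂, with w₂(0) = μ₂, v₂(0) = m₂, ψ₂(0) = ν₂, where all initial values μᵢ, mᵢ, νᵢ are ≥ 0. If μ₁ ≥ μ₂, m₁ ≥ m₂, ν₁ ≥ ν₂ and (μ₁,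 m₁, ν₁) ≠ (μ₂, m₂, ν₂), then w₁(r) > w₂(r), v₁(r) > v₂(r) and ψ₁(r) > ψ₂(r) for all 0 < r < min(R₁, R₂). -/
open Set

/-- Extract an ε-δ statement from continuity within a set. -/
private lemma cwa_eps {f : ℝ → ℝ} {s : Set ℝ} {x : ℝ} (h : ContinuousWithinAt f s x)
    {ε : ℝ} (hε : 0 < ε) :
    ∃ δ > 0, ∀ y ∈ s, |y - x| < δ → |f y - f x| < ε := by
  obtain ⟨δ, hδ, H⟩ := Metric.continuousWithinAt_iff.mp h ε hε
  refine ⟨δ, hδ, fun y hy hyx => ?_⟩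
  have := H hy (by rwa [Real.dist_eq])
  rwa [Real.dist_eq] at this

/-- If `f` is continuous within `s` at `x` and positive at `x`, it is positive nearby in `s`. -/
private lemma pos_nbhd {f : ℝ → ℝ} {s : Set ℝ} {x : ℝ} (h : ContinuousWithinAt f s x)
    (hx : 0 < f x) :
    ∃ ε > 0, ∀ y ∈ s, |y - x| < ε → 0 < f y := by
  obtain ⟨δ, hδ, H⟩ := cwa_eps h hx
  refine ⟨δ, hδ, fun y hy hyx => ?_⟩
  have := H y hy hyx
  rw [abs_sub_lt_iff] at this
  linarith [this.2]

/-- Nonnegativity propagates to a left limit point. -/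
private lemma nonneg_left_lim {f : ℝ → ℝ} {c r₀ : ℝ} (hf : ContinuousWithinAt f (Icc 0 r₀) c)
    (hc0 : 0 < c) (hcr : c ≤ r₀) (h : ∀ s, 0 ≤ s → s < c → 0 ≤ f s) : 0 ≤ f c := by
  by_contra hneg
  push_neg at hneg
  have hε : (0:ℝ) < -f c := by linarith
  obtain ⟨δ, hδ, H⟩ := cwa_eps hf hε
  set y := c - min (c / 2) (δ / 2) with hy
  have hmin : 0 < min (c / 2) (δ / 2) := lt_min (by linarith) (by linarith)
  have hy0 : 0 ≤ y := by
    have : min (c / 2) (δ / 2) ≤ c / 2 := min_le_left _ _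
    simp only [hy]; linarith
  have hyc : y < c := by simp only [hy]; linarith
  have hymem : y ∈ Icc 0 r₀ := ⟨hy0, by linarith⟩
  have habs : |y - c| < δ := by
    have h1 : min (c / 2) (δ / 2) ≤ δ / 2 := min_le_right _ _
    rw [hy, abs_sub_lt_iff]
    constructor <;> linarith
  have := H y hymem habs
  rw [abs_sub_lt_iff] at this
  have := h y hy0 hyc
  linarith [this]

/-- Key ODE lemma: if `F' + (θ/r) F > 0` on `(0,b)` and `F 0 ≥ 0` with `F` continuous on
`[0,b]`, then `F > 0` on `(0,b]`. -/
private lemma keyE {θ b : ℝ} (hθ : 0 ≤ θ) {F : ℝ → ℝ}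
    (hFc : ContinuousOn F (Icc 0 b))
    (hFd : ∀ r ∈ Ioo (0:ℝ) b, DifferentiableAt ℝ F r)
    (hF0 : 0 ≤ F 0)
    (hkey : ∀ r ∈ Ioo (0:ℝ) b, 0 < deriv F r + θ / r * F r) :
    ∀ r ∈ Ioc (0:ℝ) b, 0 < F r := by
  set G : ℝ → ℝ := fun x => x ^ θ * F x with hG
  have mono : ∀ s t : ℝ, 0 < s → s < t → t ≤ b → G s < G t := by
    intro s t hs hst htb
    have hsub : Icc s t ⊆ Icc 0 b := Icc_subset_Icc hs.le htb
    have hGc : ContinuousOn G (Icc s t) := by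
      apply ContinuousOn.mul _ (hFc.mono hsub)
      intro x hx
      exact (Real.continuousAt_rpow_const x θ
        (Or.inl (ne_of_gt (lt_of_lt_of_le hs hx.1)))).continuousWithinAt
    have hder : ∀ x ∈ interior (Icc s t), 0 < deriv G x := by
      rw [interior_Icc]
      intro x hx
      have hx0 : 0 < x := lt_trans hs hx.1
      have hxb : x ∈ Ioo (0:ℝ) b := ⟨hx0, lt_of_lt_of_le hx.2 htb⟩
      have h1 : HasDerivAt (fun y : ℝ => y ^ θ) (θ * x ^ (θ - 1)) x :=
        Real.hasDerivAt_rpow_const (Or.inl hx0.ne')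
      have h2 : HasDerivAt F (deriv F x) x := (hFd x hxb).hasDerivAt
      have h3 : HasDerivAt G (θ * x ^ (θ - 1) * F x + x ^ θ * deriv F x) x := h1.mul h2
      have h4 : deriv G x = θ * x ^ (θ - 1) * F x + x ^ θ * deriv F x := h3.deriv
      have h5 : θ * x ^ (θ - 1) * F x + x ^ θ * deriv F x
          = x ^ θ * (deriv F x + θ / x * F x) := by
        rw [Real.rpow_sub hx0, Real.rpow_one]
        field_simp
        ring
      rw [h4, h5]
      exact mul_pos (Real.rpow_pos_of_pos hx0 θ) (hkey x hxb)
    have hsm := strictMonoOn_of_deriv_pos (convex_Icc s t) hGc hder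
    exact hsm (left_mem_Icc.mpr hst.le) (right_mem_Icc.mpr hst.le) hst
  have Gnonneg : ∀ r, 0 < r → r ≤ b → 0 ≤ G r := by
    intro r hr hrb
    by_contra hneg
    push_neg at hneg
    have hεpos : (0:ℝ) < -G r := by linarith
    have hb0 : 0 < b := lt_of_lt_of_le hr hrb
    have hc0 : ContinuousWithinAt F (Icc 0 b) 0 := hFc 0 (left_mem_Icc.mpr hb0.le)
    obtain ⟨δ, hδpos, hδ⟩ := cwa_eps hc0 hεpos
    set s := min (δ / 2) (min 1 (r / 2)) with hs
    have hs1 : s ≤ 1 := le_trans (min_le_right _ _) (min_le_left _ _)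
    have hsr : s ≤ r / 2 := le_trans (min_le_right _ _) (min_le_right _ _)
    have hsδ : s ≤ δ / 2 := min_le_left _ _
    have hspos : 0 < s := lt_min (by linarith) (lt_min one_pos (by linarith))
    have hsmem : s ∈ Icc 0 b := ⟨hspos.le, by linarith⟩
    have habs : |s - 0| < δ := by rw [sub_zero, abs_of_pos hspos]; linarith
    have hFs : -(-G r) ≤ F s := by
      have := hδ s hsmem habs
      rw [abs_sub_lt_iff] at this
      have := this.1
      linarith
    have hrpow0 : 0 ≤ s ^ θ := Real.rpow_nonneg hspos.le θ
    have hrpow1 : s ^ θ ≤ 1 := Real.rpow_le_one hspos.le hs1 hθ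
    have hGs : -(-G r) ≤ G s := by
      have h1 : s ^ θ * (-(-G r)) ≤ s ^ θ * F s := mul_le_mul_of_nonneg_left hFs hrpow0
      have h2 : -(-G r) ≤ s ^ θ * (-(-G r)) := by nlinarith
      calc -(-G r) ≤ s ^ θ * (-(-G r)) := h2
        _ ≤ s ^ θ * F s := h1
        _ = G s := rfl
    have := mono s r hspos (by linarith) hrb
    simp only [neg_neg] at hGs
    linarith
  intro r hr
  have h1 : 0 ≤ G (r / 2) := Gnonneg (r / 2) (by linarith [hr.1]) (by linarith [hr.1, hr.2])
  have h2 : G (r / 2) < G r := mono _ _ (by linarith [hr.1]) (by linarith [hr.1]) hr.2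
  have h3 : 0 < G r := lt_of_le_of_lt h1 h2
  have h4 : 0 < r ^ θ := Real.rpow_pos_of_pos hr.1 θ
  by_contra hc
  push_neg at hc
  have : G r ≤ 0 := mul_nonpos_of_nonneg_of_nonpos h4.le hc
  linarith

/-- Comparison principle between supersolutions and subsolutions of the cooperative
radial system `w' + (θ/r) w = v^p`, `v' = ψ`, `ψ' + (θ/r) ψ = w^q`. -/
theorem comparison_principle (θ p q R₁ R₂ : ℝ) (hθ : 0 ≤ θ) (hp : 0 < p) (hq : 1 ≤ q)
    (hR₁ : 0 < R₁) (hR₂ : 0 < R₂)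
    (w₁ v₁ ψ₁ w₂ v₂ ψ₂ : ℝ → ℝ)
    (μ₁ m₁ ν₁ μ₂ m₂ ν₂ : ℝ)
    -- regularity of the supersolution
    (hc₁ : ContinuousOn w₁ (Set.Ico 0 R₁) ∧ ContinuousOn v₁ (Set.Ico 0 R₁) ∧
      ContinuousOn ψ₁ (Set.Ico 0 R₁))
    (hd₁ : ∀ r ∈ Set.Ioo (0:ℝ) R₁, DifferentiableAt ℝ w₁ r ∧ DifferentiableAt ℝ v₁ r ∧
      DifferentiableAt ℝ ψ₁ r)
    (hnn₁ : ∀ r ∈ Set.Ico (0:ℝ) R₁, 0 ≤ w₁ r ∧ 0 ≤ v₁ r ∧ 0 ≤ ψ₁ r)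
    -- supersolution inequalities
    (hsup₁ : ∀ r ∈ Set.Ioo (0:ℝ) R₁, v₁ r ^ p ≤ deriv w₁ r + θ / r * w₁ r)
    (hsup₂ : ∀ r ∈ Set.Ioo (0:ℝ) R₁, ψ₁ r ≤ deriv v₁ r)
    (hsup₃ : ∀ r ∈ Set.Ioo (0:ℝ) R₁, w₁ r ^ q ≤ deriv ψ₁ r + θ / r * ψ₁ r)
    (hi₁ : w₁ 0 = μ₁ ∧ v₁ 0 = m₁ ∧ ψ₁ 0 = ν₁)
    -- regularity of the subsolution
    (hc₂ : ContinuousOn w₂ (Set.Ico 0 R₂) ∧ ContinuousOn v₂ (Set.Ico 0 R₂) ∧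
      ContinuousOn ψ₂ (Set.Ico 0 R₂))
    (hd₂ : ∀ r ∈ Set.Ioo (0:ℝ) R₂, DifferentiableAt ℝ w₂ r ∧ DifferentiableAt ℝ v₂ r ∧
      DifferentiableAt ℝ ψ₂ r)
    (hnn₂ : ∀ r ∈ Set.Ico (0:ℝ) R₂, 0 ≤ w₂ r ∧ 0 ≤ v₂ r ∧ 0 ≤ ψ₂ r)
    -- subsolution inequalities
    (hsub₁ : ∀ r ∈ Set.Ioo (0:ℝ) R₂, deriv w₂ r + θ / r * w₂ r ≤ v₂ r ^ p)
    (hsub₂ : ∀ r ∈ Set.Ioo (0:ℝ) R₂, deriv v₂ r ≤ ψ₂ r)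
    (hsub₃ : ∀ r ∈ Set.Ioo (0:ℝ) R₂, deriv ψ₂ r + θ / r * ψ₂ r ≤ w₂ r ^ q)
    (hi₂ : w₂ 0 = μ₂ ∧ v₂ 0 = m₂ ∧ ψ₂ 0 = ν₂)
    -- ordering of the (nonnegative) initial data
    (hμnn : 0 ≤ μ₂) (hmnn : 0 ≤ m₂) (hνnn : 0 ≤ ν₂)
    (hμ : μ₂ ≤ μ₁) (hm : m₂ ≤ m₁) (hν : ν₂ ≤ ν₁)
    (hne : (μ₁, m₁, ν₁) ≠ (μ₂, m₂, ν₂)) :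
    ∀ r ∈ Set.Ioo (0:ℝ) (min R₁ R₂),
      w₂ r < w₁ r ∧ v₂ r < v₁ r ∧ ψ₂ r < ψ₁ r := by
  have hq0 : (0:ℝ) < q := lt_of_lt_of_le one_pos hq
  intro r₀ hr₀
  obtain ⟨hr₀0, hr₀R⟩ := hr₀
  have hr₀R₁ : r₀ < R₁ := lt_of_lt_of_le hr₀R (min_le_left _ _)
  have hr₀R₂ : r₀ < R₂ := lt_of_lt_of_le hr₀R (min_le_right _ _)
  set W : ℝ → ℝ := fun r => w₁ r - w₂ r with hWdef
  set V : ℝ → ℝ := fun r => v₁ r - v₂ r with hVdef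
  set Ψ : ℝ → ℝ := fun r => ψ₁ r - ψ₂ r with hΨdef
  -- membership helpers
  have mem₁ : Icc (0:ℝ) r₀ ⊆ Ico 0 R₁ := fun s hs => ⟨hs.1, lt_of_le_of_lt hs.2 hr₀R₁⟩
  have mem₂ : Icc (0:ℝ) r₀ ⊆ Ico 0 R₂ := fun s hs => ⟨hs.1, lt_of_le_of_lt hs.2 hr₀R₂⟩
  have memo₁ : Ioo (0:ℝ) r₀ ⊆ Ioo 0 R₁ := fun s hs => ⟨hs.1, lt_trans hs.2 hr₀R₁⟩
  have memo₂ : Ioo (0:ℝ) r₀ ⊆ Ioo 0 R₂ := fun s hs => ⟨hs.1, lt_trans hs.2 hr₀R₂⟩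
  -- continuity of differences
  have cW : ContinuousOn W (Icc 0 r₀) := (hc₁.1.mono mem₁).sub (hc₂.1.mono mem₂)
  have cV : ContinuousOn V (Icc 0 r₀) := (hc₁.2.1.mono mem₁).sub (hc₂.2.1.mono mem₂)
  have cΨ : ContinuousOn Ψ (Icc 0 r₀) := (hc₁.2.2.mono mem₁).sub (hc₂.2.2.mono mem₂)
  -- differentiability of differences
  have dW : ∀ r ∈ Ioo (0:ℝ) r₀, DifferentiableAt ℝ W r := fun r hr =>
    ((hd₁ r (memo₁ hr)).1).sub ((hd₂ r (memo₂ hr)).1)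
  have dV : ∀ r ∈ Ioo (0:ℝ) r₀, DifferentiableAt ℝ V r := fun r hr =>
    ((hd₁ r (memo₁ hr)).2.1).sub ((hd₂ r (memo₂ hr)).2.1)
  have dΨ : ∀ r ∈ Ioo (0:ℝ) r₀, DifferentiableAt ℝ Ψ r := fun r hr =>
    ((hd₁ r (memo₁ hr)).2.2).sub ((hd₂ r (memo₂ hr)).2.2)
  -- derivative computations
  have derivW : ∀ r ∈ Ioo (0:ℝ) r₀, deriv W r = deriv w₁ r - deriv w₂ r := by
    intro r hr
    exact deriv_sub (hd₁ r (memo₁ hr)).1 (hd₂ r (memo₂ hr)).1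
  have derivV : ∀ r ∈ Ioo (0:ℝ) r₀, deriv V r = deriv v₁ r - deriv v₂ r := by
    intro r hr
    exact deriv_sub (hd₁ r (memo₁ hr)).2.1 (hd₂ r (memo₂ hr)).2.1
  have derivΨ : ∀ r ∈ Ioo (0:ℝ) r₀, deriv Ψ r = deriv ψ₁ r - deriv ψ₂ r := by
    intro r hr
    exact deriv_sub (hd₁ r (memo₁ hr)).2.2 (hd₂ r (memo₂ hr)).2.2
  -- key differential inequalities
  have keyW : ∀ r ∈ Ioo (0:ℝ) r₀, 0 < V r → 0 < deriv W r + θ / r * W r := by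
    intro r hr hVr
    have h1 := hsup₁ r (memo₁ hr)
    have h2 := hsub₁ r (memo₂ hr)
    have hv2 : 0 ≤ v₂ r := (hnn₂ r ⟨hr.1.le, (memo₂ hr).2⟩).2.1
    have hvlt : v₂ r < v₁ r := by
      have : 0 < v₁ r - v₂ r := hVr
      linarith
    have hpow : v₂ r ^ p < v₁ r ^ p := Real.rpow_lt_rpow hv2 hvlt hp
    have hWr : W r = w₁ r - w₂ r := rfl
    rw [derivW r hr, hWr]
    nlinarith [h1, h2, hpow]
  have keyΨ : ∀ r ∈ Ioo (0:ℝ) r₀, 0 < W r → 0 < deriv Ψ r + θ / r * Ψ r := by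
    intro r hr hWr
    have h1 := hsup₃ r (memo₁ hr)
    have h2 := hsub₃ r (memo₂ hr)
    have hw2 : 0 ≤ w₂ r := (hnn₂ r ⟨hr.1.le, (memo₂ hr).2⟩).1
    have hwlt : w₂ r < w₁ r := by
      have : 0 < w₁ r - w₂ r := hWr
      linarith
    have hpow : w₂ r ^ q < w₁ r ^ q := Real.rpow_lt_rpow hw2 hwlt hq0
    have hΨr : Ψ r = ψ₁ r - ψ₂ r := rfl
    rw [derivΨ r hr, hΨr]
    nlinarith [h1, h2, hpow]
  have keyV : ∀ r ∈ Ioo (0:ℝ) r₀, Ψ r ≤ deriv V r := by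
    intro r hr
    have h1 := hsup₂ r (memo₁ hr)
    have h2 := hsub₂ r (memo₂ hr)
    have hΨr : Ψ r = ψ₁ r - ψ₂ r := rfl
    rw [derivV r hr, hΨr]
    linarith
  -- initial values
  have hW0 : 0 ≤ W 0 := by
    have : W 0 = w₁ 0 - w₂ 0 := rfl
    rw [this, hi₁.1, hi₂.1]; linarith
  have hV0 : 0 ≤ V 0 := by
    have : V 0 = v₁ 0 - v₂ 0 := rfl
    rw [this, hi₁.2.1, hi₂.2.1]; linarith
  have hΨ0 : 0 ≤ Ψ 0 := by
    have : Ψ 0 = ψ₁ 0 - ψ₂ 0 := rfl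
    rw [this, hi₁.2.2, hi₂.2.2]; linarith
  -- generic positivity propagation lemmas
  have claimW : ∀ b, 0 < b → b ≤ r₀ → (∀ s ∈ Ioo (0:ℝ) b, 0 < V s) →
      ∀ s ∈ Ioc (0:ℝ) b, 0 < W s := by
    intro b hb hbr hV
    exact keyE hθ (cW.mono (Icc_subset_Icc le_rfl hbr))
      (fun r hr => dW r ⟨hr.1, lt_of_lt_of_le hr.2 hbr⟩) hW0
      (fun r hr => keyW r ⟨hr.1, lt_of_lt_of_le hr.2 hbr⟩ (hV r hr))
  have claimΨ : ∀ b, 0 < b → b ≤ r₀ → (∀ s ∈ Ioo (0:ℝ) b, 0 < W s) →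
      ∀ s ∈ Ioc (0:ℝ) b, 0 < Ψ s := by
    intro b hb hbr hW
    exact keyE hθ (cΨ.mono (Icc_subset_Icc le_rfl hbr))
      (fun r hr => dΨ r ⟨hr.1, lt_of_lt_of_le hr.2 hbr⟩) hΨ0
      (fun r hr => keyΨ r ⟨hr.1, lt_of_lt_of_le hr.2 hbr⟩ (hW r hr))
  have claimV : ∀ b, 0 < b → b ≤ r₀ → (∀ s ∈ Ioo (0:ℝ) b, 0 < Ψ s) →
      ∀ s ∈ Ioc (0:ℝ) b, 0 < V s := by
    intro b hb hbr hΨp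
    have hsm : StrictMonoOn V (Icc 0 b) := by
      apply strictMonoOn_of_deriv_pos (convex_Icc 0 b)
        (cV.mono (Icc_subset_Icc le_rfl hbr))
      intro r hr
      rw [interior_Icc] at hr
      have hr' : r ∈ Ioo (0:ℝ) r₀ := ⟨hr.1, lt_of_lt_of_le hr.2 hbr⟩
      exact lt_of_lt_of_le (hΨp r hr) (keyV r hr')
    intro s hs
    have := hsm (left_mem_Icc.mpr hb.le) ⟨hs.1.le, hs.2⟩ hs.1
    linarith [hV0]
  -- extract a strict initial inequality
  have init : μ₂ < μ₁ ∨ m₂ < m₁ ∨ ν₂ < ν₁ := by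
    by_contra h
    push_neg at h
    obtain ⟨h1, h2, h3⟩ := h
    exact hne (by
      have e1 : μ₁ = μ₂ := le_antisymm h1 hμ
      have e2 : m₁ = m₂ := le_antisymm h2 hm
      have e3 : ν₁ = ν₂ := le_antisymm h3 hν
      rw [e1, e2, e3])
  -- initial local positivity
  obtain ⟨δ, hδpos, hδr₀, hNδ, hVδ⟩ :
      ∃ δ, 0 < δ ∧ δ ≤ r₀ ∧ (∀ s ∈ Icc (0:ℝ) δ, 0 ≤ W s ∧ 0 ≤ V s ∧ 0 ≤ Ψ s) ∧
        (∀ s ∈ Ioc (0:ℝ) δ, 0 < V s) := by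
    have h0mem : (0:ℝ) ∈ Icc (0:ℝ) r₀ := left_mem_Icc.mpr hr₀0.le
    rcases init with hμlt | hmlt | hνlt
    · -- W 0 > 0
      have hW0pos : 0 < W 0 := by
        have : W 0 = w₁ 0 - w₂ 0 := rfl
        rw [this, hi₁.1, hi₂.1]; linarith
      obtain ⟨ε, hε, hball⟩ := pos_nbhd (cW 0 h0mem) hW0pos
      set δ := min (ε / 2) r₀ with hδ
      have hδpos : 0 < δ := lt_min (by linarith) hr₀0
      have hδr₀ : δ ≤ r₀ := min_le_right _ _
      have hWpos : ∀ s ∈ Icc (0:ℝ) δ, 0 < W s := by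
        intro s hs
        apply hball s ⟨hs.1, hs.2.trans hδr₀⟩
        rw [sub_zero, abs_of_nonneg hs.1]
        have : δ ≤ ε / 2 := min_le_left _ _
        linarith [hs.2]
      have hΨpos : ∀ s ∈ Ioc (0:ℝ) δ, 0 < Ψ s :=
        claimΨ δ hδpos hδr₀ (fun s hs => hWpos s ⟨hs.1.le, hs.2.le⟩)
      have hVpos : ∀ s ∈ Ioc (0:ℝ) δ, 0 < V s :=
        claimV δ hδpos hδr₀ (fun s hs => hΨpos s ⟨hs.1, hs.2.le⟩)
      refine ⟨δ, hδpos, hδr₀, ?_, hVpos⟩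
      intro s hs
      rcases eq_or_lt_of_le hs.1 with h | h
      · rw [← h]; exact ⟨hW0, hV0, hΨ0⟩
      · exact ⟨(hWpos s hs).le, (hVpos s ⟨h, hs.2⟩).le, (hΨpos s ⟨h, hs.2⟩).le⟩
    · -- V 0 > 0
      have hV0pos : 0 < V 0 := by
        have : V 0 = v₁ 0 - v₂ 0 := rfl
        rw [this, hi₁.2.1, hi₂.2.1]; linarith
      obtain ⟨ε, hε, hball⟩ := pos_nbhd (cV 0 h0mem) hV0pos
      set δ := min (ε / 2) r₀ with hδ
      have hδpos : 0 < δ := lt_min (by linarith) hr₀0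
      have hδr₀ : δ ≤ r₀ := min_le_right _ _
      have hVpos : ∀ s ∈ Icc (0:ℝ) δ, 0 < V s := by
        intro s hs
        apply hball s ⟨hs.1, hs.2.trans hδr₀⟩
        rw [sub_zero, abs_of_nonneg hs.1]
        have : δ ≤ ε / 2 := min_le_left _ _
        linarith [hs.2]
      have hWpos : ∀ s ∈ Ioc (0:ℝ) δ, 0 < W s :=
        claimW δ hδpos hδr₀ (fun s hs => hVpos s ⟨hs.1.le, hs.2.le⟩)
      have hΨpos : ∀ s ∈ Ioc (0:ℝ) δ, 0 < Ψ s :=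
        claimΨ δ hδpos hδr₀ (fun s hs => hWpos s ⟨hs.1, hs.2.le⟩)
      refine ⟨δ, hδpos, hδr₀, ?_, fun s hs => hVpos s ⟨hs.1.le, hs.2⟩⟩
      intro s hs
      rcases eq_or_lt_of_le hs.1 with h | h
      · rw [← h]; exact ⟨hW0, hV0, hΨ0⟩
      · exact ⟨(hWpos s ⟨h, hs.2⟩).le, (hVpos s hs).le, (hΨpos s ⟨h, hs.2⟩).le⟩
    · -- Ψ 0 > 0
      have hΨ0pos : 0 < Ψ 0 := by
        have : Ψ 0 = ψ₁ 0 - ψ₂ 0 := rfl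
        rw [this, hi₁.2.2, hi₂.2.2]; linarith
      obtain ⟨ε, hε, hball⟩ := pos_nbhd (cΨ 0 h0mem) hΨ0pos
      set δ := min (ε / 2) r₀ with hδ
      have hδpos : 0 < δ := lt_min (by linarith) hr₀0
      have hδr₀ : δ ≤ r₀ := min_le_right _ _
      have hΨpos : ∀ s ∈ Icc (0:ℝ) δ, 0 < Ψ s := by
        intro s hs
        apply hball s ⟨hs.1, hs.2.trans hδr₀⟩
        rw [sub_zero, abs_of_nonneg hs.1]
        have : δ ≤ ε / 2 := min_le_left _ _
        linarith [hs.2]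
      have hVpos : ∀ s ∈ Ioc (0:ℝ) δ, 0 < V s :=
        claimV δ hδpos hδr₀ (fun s hs => hΨpos s ⟨hs.1.le, hs.2.le⟩)
      have hWpos : ∀ s ∈ Ioc (0:ℝ) δ, 0 < W s :=
        claimW δ hδpos hδr₀ (fun s hs => hVpos s ⟨hs.1, hs.2.le⟩)
      refine ⟨δ, hδpos, hδr₀, ?_, hVpos⟩
      intro s hs
      rcases eq_or_lt_of_le hs.1 with h | h
      · rw [← h]; exact ⟨hW0, hV0, hΨ0⟩
      · exact ⟨(hWpos s ⟨h, hs.2⟩).le, (hVpos s ⟨h, hs.2⟩).le, (hΨpos s hs).le⟩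
  -- propagation lemma
  have propag : ∀ b, 0 < b → b ≤ r₀ → δ ≤ b →
      (∀ s ∈ Icc (0:ℝ) b, 0 ≤ W s ∧ 0 ≤ V s ∧ 0 ≤ Ψ s) →
      ∀ s ∈ Ioc (0:ℝ) b, 0 < W s ∧ 0 < V s ∧ 0 < Ψ s := by
    intro b hb hbr hδb hN
    have Vmono : MonotoneOn V (Icc 0 b) := by
      apply monotoneOn_of_deriv_nonneg (convex_Icc 0 b)
        (cV.mono (Icc_subset_Icc le_rfl hbr))
      · intro r hr
        rw [interior_Icc] at hr
        exact (dV r ⟨hr.1, lt_of_lt_of_le hr.2 hbr⟩).differentiableWithinAt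
      · intro r hr
        rw [interior_Icc] at hr
        have hr' : r ∈ Ioo (0:ℝ) r₀ := ⟨hr.1, lt_of_lt_of_le hr.2 hbr⟩
        exact le_trans (hN r ⟨hr.1.le, hr.2.le⟩).2.2 (keyV r hr')
    have Vpos : ∀ s ∈ Ioc (0:ℝ) b, 0 < V s := by
      intro s hs
      rcases le_or_gt s δ with h | h
      · exact hVδ s ⟨hs.1, h⟩
      · have := Vmono ⟨hδpos.le, hδb⟩ ⟨le_trans hδpos.le h.le, hs.2⟩ h.le
        exact lt_of_lt_of_le (hVδ δ ⟨hδpos, le_rfl⟩) this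
    have Wpos : ∀ s ∈ Ioc (0:ℝ) b, 0 < W s :=
      claimW b hb hbr (fun s hs => Vpos s ⟨hs.1, hs.2.le⟩)
    have Ψpos : ∀ s ∈ Ioc (0:ℝ) b, 0 < Ψ s :=
      claimΨ b hb hbr (fun s hs => Wpos s ⟨hs.1, hs.2.le⟩)
    exact fun s hs => ⟨Wpos s hs, Vpos s hs, Ψpos s hs⟩
  -- the supremum argument
  set S : Set ℝ := {x | x ∈ Icc (0:ℝ) r₀ ∧
    ∀ s ∈ Icc (0:ℝ) x, 0 ≤ W s ∧ 0 ≤ V s ∧ 0 ≤ Ψ s} with hSdef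
  have hδS : δ ∈ S := ⟨⟨hδpos.le, hδr₀⟩, hNδ⟩
  have hSne : S.Nonempty := ⟨δ, hδS⟩
  have hbdd : BddAbove S := ⟨r₀, fun x hx => hx.1.2⟩
  set c := sSup S with hc
  have hδc : δ ≤ c := le_csSup hbdd hδS
  have hcr₀ : c ≤ r₀ := csSup_le hSne (fun x hx => hx.1.2)
  have hcpos : 0 < c := lt_of_lt_of_le hδpos hδc
  have hlt : ∀ s, 0 ≤ s → s < c → (0 ≤ W s ∧ 0 ≤ V s ∧ 0 ≤ Ψ s) := by
    intro s hs hsc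
    obtain ⟨t, htS, hst⟩ := exists_lt_of_lt_csSup hSne hsc
    exact htS.2 s ⟨hs, hst.le⟩
  have hNc : ∀ s ∈ Icc (0:ℝ) c, 0 ≤ W s ∧ 0 ≤ V s ∧ 0 ≤ Ψ s := by
    intro s hs
    rcases lt_or_eq_of_le hs.2 with h | h
    · exact hlt s hs.1 h
    · rw [h]
      refine ⟨?_, ?_, ?_⟩
      · exact nonneg_left_lim (cW c ⟨hcpos.le, hcr₀⟩) hcpos hcr₀
          (fun t ht htc => (hlt t ht htc).1)
      · exact nonneg_left_lim (cV c ⟨hcpos.le, hcr₀⟩) hcpos hcr₀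
          (fun t ht htc => (hlt t ht htc).2.1)
      · exact nonneg_left_lim (cΨ c ⟨hcpos.le, hcr₀⟩) hcpos hcr₀
          (fun t ht htc => (hlt t ht htc).2.2)
  have hceq : c = r₀ := by
    by_contra hne'
    have hclt : c < r₀ := lt_of_le_of_ne hcr₀ hne'
    have hposc := propag c hcpos hcr₀ hδc hNc c ⟨hcpos, le_rfl⟩
    obtain ⟨ε₁, hε₁, H₁⟩ := pos_nbhd (cW c ⟨hcpos.le, hcr₀⟩) hposc.1
    obtain ⟨ε₂, hε₂, H₂⟩ := pos_nbhd (cV c ⟨hcpos.le, hcr₀⟩) hposc.2.1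
    obtain ⟨ε₃, hε₃, H₃⟩ := pos_nbhd (cΨ c ⟨hcpos.le, hcr₀⟩) hposc.2.2
    set ε := min (min ε₁ ε₂) (min ε₃ (r₀ - c)) with hε
    have hεpos : 0 < ε := lt_min (lt_min hε₁ hε₂) (lt_min hε₃ (by linarith))
    have hεε₁ : ε ≤ ε₁ := le_trans (min_le_left _ _) (min_le_left _ _)
    have hεε₂ : ε ≤ ε₂ := le_trans (min_le_left _ _) (min_le_right _ _)
    have hεε₃ : ε ≤ ε₃ := le_trans (min_le_right _ _) (min_le_left _ _)
    have hεr : ε ≤ r₀ - c := le_trans (min_le_right _ _) (min_le_right _ _)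
    set t := c + ε / 2 with ht
    have htr₀ : t ≤ r₀ := by simp only [ht]; linarith
    have htS : t ∈ S := by
      refine ⟨⟨by simp only [ht]; linarith, htr₀⟩, ?_⟩
      intro s hs
      rcases le_or_gt s c with h | h
      · exact hNc s ⟨hs.1, h⟩
      · have hsIcc : s ∈ Icc (0:ℝ) r₀ := ⟨hs.1, hs.2.trans htr₀⟩
        have habs : |s - c| < ε := by
          rw [abs_of_pos (by linarith)]
          have : s ≤ c + ε / 2 := hs.2
          linarith
        exact ⟨(H₁ s hsIcc (lt_of_lt_of_le habs hεε₁)).le,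
          (H₂ s hsIcc (lt_of_lt_of_le habs hεε₂)).le,
          (H₃ s hsIcc (lt_of_lt_of_le habs hεε₃)).le⟩
    have : t ≤ c := le_csSup hbdd htS
    simp only [ht] at this
    linarith
  have final := propag r₀ hr₀0 le_rfl hδr₀ (hceq ▸ hNc) r₀ ⟨hr₀0, le_rfl⟩
  have e1 : W r₀ = w₁ r₀ - w₂ r₀ := rfl
  have e2 : V r₀ = v₁ r₀ - v₂ r₀ := rfl
  have e3 : Ψ r₀ = ψ₁ r₀ - ψ₂ r₀ := rfl
  refine ⟨?_, ?_, ?_⟩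
  · have := final.1; rw [e1] at this; linarith
  · have := final.2.1; rw [e2] at this; linarith
  · have := final.2.2; rw [e3] at this; linarith
end
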